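/- arXiv:math/9912199 — 4 statements merged into one kernel-verified Lean document; each statement's English description precedes it below -/
import Mathlib

section
/- The complement of a coordinate subspace arrangement in ℂ^m containing the hyperplane {z_i = 0} decomposes as a product: if A is a set of coordinate subspaces of ℂ^m containing the hyperplane z_i = 0, then ℂ^m minus the union of A is homeomorphic to (ℂ^{m-1} minus the union of an induced coordinate arrangement in the hyperplane) × ℂ*. -/
/-- The coordinate subspace `L_I ⊆ ℂ^m` (indexed by `Fin m`): points vanishing on `I`. -/
def coordSubspace {m : ℕ} (I : Set (Fin m)) : Set (Fin m → ℂ) :=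
  {z | ∀ i ∈ I, z i = 0}

/-- The complement of an arrangement of subspaces. -/
def complementOf {m : ℕ} (A : Set (Set (Fin m → ℂ))) : Set (Fin m → ℂ) :=
  {z | z ∉ ⋃₀ A}

/-!
Splitting off the coordinate `z i` identifies `ℂ^m` with `ℂ^{m-1} × ℂ`. Since the hyperplane
`z i = 0` belongs to `A`, every subspace `L_I` with `i ∈ I` lies inside it and can be discarded;
the remaining ones, `L_I` with `i ∉ I`, are products `L'_I × ℂ` of a coordinate subspace of
`ℂ^{m-1}` with the `i`-th axis. So a point lies off `⋃ A` exactly when `z i ≠ 0` and its other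
coordinates avoid the induced arrangement of the `L'_I`.
-/

section

variable {m : ℕ} (i : Fin m)

def inducedArrangement (A : Set (Set (Fin m → ℂ))) : Set (Set ({j : Fin m // j ≠ i} → ℂ)) :=
  {S | ∃ I : Set (Fin m), coordSubspace I ∈ A ∧ i ∉ I ∧
    S = {z | ∀ j ∈ Subtype.val ⁻¹' I, z j = 0}}

theorem exists_eq_coordSubspace_of_mem_inducedArrangement {A : Set (Set (Fin m → ℂ))}
    {L : Set ({j : Fin m // j ≠ i} → ℂ)} (hL : L ∈ inducedArrangement i A) :
    ∃ I : Set {j : Fin m // j ≠ i}, L = {z | ∀ j ∈ I, z j = 0} := by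
  obtain ⟨I, -, -, rfl⟩ := hL
  exact ⟨_, rfl⟩

theorem mem_coordSubspace_singleton {z : Fin m → ℂ} : z ∈ coordSubspace {i} ↔ z i = 0 := by
  simp [coordSubspace]

theorem mem_coordSubspace_iff_restrict {I : Set (Fin m)} (hiI : i ∉ I) {z : Fin m → ℂ} :
    z ∈ coordSubspace I ↔
      (fun j : {j : Fin m // j ≠ i} => z j) ∈ {w | ∀ j ∈ Subtype.val ⁻¹' I, w j = 0} := by
  refine ⟨fun hz j hj => hz j hj, fun hz j hj => hz ⟨j, ?_⟩ hj⟩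
  rintro rfl
  exact hiI hj

theorem mem_sUnion_iff_of_mem_hyperplane {A : Set (Set (Fin m → ℂ))}
    (hA : ∀ L ∈ A, ∃ I : Set (Fin m), L = coordSubspace I) (hi : coordSubspace {i} ∈ A)
    {z : Fin m → ℂ} :
    z ∈ ⋃₀ A ↔ z i = 0 ∨ (fun j : {j : Fin m // j ≠ i} => z j) ∈ ⋃₀ inducedArrangement i A := by
  constructor
  · rintro ⟨L, hLA, hzL⟩
    obtain ⟨I, rfl⟩ := hA L hLA
    by_cases hiI : i ∈ I
    · exact .inl (hzL i hiI)
    · exact .inr ⟨_, ⟨I, hLA, hiI, rfl⟩, (mem_coordSubspace_iff_restrict i hiI).1 hzL⟩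
  · rintro (hzi | ⟨_, ⟨I, hIA, hiI, rfl⟩, hzS⟩)
    · exact ⟨_, hi, (mem_coordSubspace_singleton i).2 hzi⟩
    · exact ⟨_, hIA, (mem_coordSubspace_iff_restrict i hiI).2 hzS⟩

end

/-- If a coordinate subspace arrangement `A` in `ℂ^m` contains the hyperplane
`{z | z i = 0}`, then its complement decomposes (up to homeomorphism) as the product of the
complement of an induced coordinate subspace arrangement in the hyperplane `ℂ^{m-1}` and `ℂ*`. -/
theorem complement_decomposes_of_mem_hyperplane {m : ℕ} (i : Fin m)
    (A : Set (Set (Fin m → ℂ)))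
    (hA : ∀ L ∈ A, ∃ I : Set (Fin m), L = coordSubspace I)
    (hi : coordSubspace ({i} : Set (Fin m)) ∈ A) :
    ∃ A' : Set (Set ({j : Fin m // j ≠ i} → ℂ)),
      (∀ L ∈ A', ∃ I : Set {j : Fin m // j ≠ i},
        L = {z : {j : Fin m // j ≠ i} → ℂ | ∀ j ∈ I, z j = 0}) ∧
      Nonempty ((complementOf A) ≃ₜ
        ({z : {j : Fin m // j ≠ i} → ℂ | z ∉ ⋃₀ A'} × {w : ℂ // w ≠ 0})) := by
  let split : (Fin m → ℂ) ≃ₜ ({j : Fin m // j ≠ i} → ℂ) × ℂ :=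
    (Homeomorph.funSplitAt ℂ i).trans (Homeomorph.prodComm _ _)
  have hsplit : complementOf A =
      split ⁻¹' ({z | z ∉ ⋃₀ inducedArrangement i A} ×ˢ {w | w ≠ 0}) := by
    ext z
    simp [complementOf, mem_sUnion_iff_of_mem_hyperplane i hA hi, split, and_comm]
  exact ⟨inducedArrangement i A,
    fun _ => exists_eq_coordSubspace_of_mem_inducedArrangement i,
    ⟨(split.sets hsplit).trans (Homeomorph.Set.prod _ _)⟩⟩
end

section
/- For K = ∂Δ^{m-1}, the moment-angle complex Z_K is homeomorphic to the sphere S^{2m-1}. -/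
/-- The block `B_I = {z : |z_i| ≤ 1 for i ∈ I, |z_j| = 1 for j ∉ I}`. -/
def blockB {m : ℕ} (I : Finset (Fin m)) : Set (Fin m → ℂ) :=
  {z | (∀ i ∈ I, ‖z i‖ ≤ 1) ∧ ∀ j, j ∉ I → ‖z j‖ = 1}

/-- The moment-angle complex `Z_K = ⋃_{I face of K} B_I`. -/
def momentAngle {m : ℕ} (K : Set (Finset (Fin m))) : Set (Fin m → ℂ) :=
  ⋃ I ∈ {I : Finset (Fin m) | I ∈ K}, blockB I

lemma momentAngle_eq (m : ℕ) (hm : 1 ≤ m) :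
    momentAngle {σ : Finset (Fin m) | σ ≠ Finset.univ} = Metric.sphere (0 : Fin m → ℂ) 1 := by
  have : Nonempty (Fin m) := ⟨⟨0, hm⟩⟩
  ext z
  simp only [momentAngle, blockB, Set.mem_iUnion, Set.mem_setOf_eq,
    mem_sphere_zero_iff_norm]
  constructor
  · rintro ⟨I, hI, h1, h2⟩
    obtain ⟨j, hj⟩ : ∃ j, j ∉ I := by
      by_contra hcon; push_neg at hcon
      exact hI (Finset.eq_univ_iff_forall.mpr hcon)
    refine le_antisymm ?_ ?_
    · refine pi_norm_le_iff_of_nonneg zero_le_one |>.mpr fun i => ?_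
      by_cases hi : i ∈ I
      · exact h1 i hi
      · exact le_of_eq (h2 i hi)
    · calc (1:ℝ) = ‖z j‖ := (h2 j hj).symm
        _ ≤ ‖z‖ := norm_le_pi_norm z j
  · intro h
    obtain ⟨i₀, -, hi₀⟩ := Finset.exists_mem_eq_sup Finset.univ Finset.univ_nonempty
      (fun i => ‖z i‖₊)
    have hzi₀ : ‖z i₀‖ = 1 := by
      have := Pi.norm_def z
      rw [this, hi₀] at h
      simpa using h
    refine ⟨Finset.univ.erase i₀, ?_, fun i _ => ?_, fun j hj => ?_⟩
    · intro hcon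
      have h2 : i₀ ∈ Finset.univ.erase i₀ := by rw [hcon]; exact Finset.mem_univ i₀
      exact (Finset.notMem_erase i₀ _) h2
    · calc ‖z i‖ ≤ ‖z‖ := norm_le_pi_norm z i
        _ = 1 := h
    · have : j = i₀ := by
        by_contra hne
        exact hj (Finset.mem_erase.mpr ⟨hne, Finset.mem_univ j⟩)
      rw [this]; exact hzi₀

noncomputable def sphereHomeoCLE {E F : Type*} [NormedAddCommGroup E] [NormedSpace ℝ E]
    [NormedAddCommGroup F] [NormedSpace ℝ F] (e : E ≃L[ℝ] F) :
    (Metric.sphere (0 : E) 1) ≃ₜ (Metric.sphere (0 : F) 1) where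
  toFun z := ⟨‖e z.1‖⁻¹ • e z.1, by
    have hz : (z : E) ≠ 0 := by
      have := z.2
      rw [mem_sphere_zero_iff_norm] at this
      intro h; rw [h] at this; simp at this
    have hez : e z.1 ≠ 0 := fun h => hz (by simpa using congrArg e.symm h)
    have hn : ‖e z.1‖ ≠ 0 := norm_ne_zero_iff.mpr hez
    rw [mem_sphere_zero_iff_norm, norm_smul, norm_inv, norm_norm, inv_mul_cancel₀ hn]⟩
  invFun w := ⟨‖e.symm w.1‖⁻¹ • e.symm w.1, by
    have hw : (w : F) ≠ 0 := by
      have := w.2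
      rw [mem_sphere_zero_iff_norm] at this
      intro h; rw [h] at this; simp at this
    have hew : e.symm w.1 ≠ 0 := fun h => hw (by simpa using congrArg e h)
    have hn : ‖e.symm w.1‖ ≠ 0 := norm_ne_zero_iff.mpr hew
    rw [mem_sphere_zero_iff_norm, norm_smul, norm_inv, norm_norm, inv_mul_cancel₀ hn]⟩
  left_inv z := by
    have hz1 : ‖(z : E)‖ = 1 := mem_sphere_zero_iff_norm.mp z.2
    have hz : (z : E) ≠ 0 := fun h => by rw [h] at hz1; simp at hz1
    have hez : e z.1 ≠ 0 := fun h => hz (by simpa using congrArg e.symm h)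
    have hn : ‖e z.1‖ ≠ 0 := norm_ne_zero_iff.mpr hez
    ext
    simp only [map_smul, e.symm_apply_apply, norm_smul, norm_inv, norm_norm, hz1, mul_one,
      inv_inv, smul_smul]
    rw [mul_inv_cancel₀ hn, one_smul]
  right_inv w := by
    have hw1 : ‖(w : F)‖ = 1 := mem_sphere_zero_iff_norm.mp w.2
    have hw : (w : F) ≠ 0 := fun h => by rw [h] at hw1; simp at hw1
    have hew : e.symm w.1 ≠ 0 := fun h => hw (by simpa using congrArg e h)
    have hn : ‖e.symm w.1‖ ≠ 0 := norm_ne_zero_iff.mpr hew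
    ext
    simp only [map_smul, e.apply_symm_apply, norm_smul, norm_inv, norm_norm, hw1, mul_one,
      inv_inv, smul_smul]
    rw [mul_inv_cancel₀ hn, one_smul]
  continuous_toFun := by
    apply Continuous.subtype_mk
    have hc : Continuous fun z : Metric.sphere (0 : E) 1 => e z.1 :=
      e.continuous.comp continuous_subtype_val
    refine Continuous.smul (hc.norm.inv₀ fun z => ?_) hc
    have hz1 : ‖(z : E)‖ = 1 := mem_sphere_zero_iff_norm.mp z.2
    have hz : (z : E) ≠ 0 := fun h => by rw [h] at hz1; simp at hz1
    exact norm_ne_zero_iff.mpr fun h => hz (by simpa using congrArg e.symm h)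
  continuous_invFun := by
    apply Continuous.subtype_mk
    have hc : Continuous fun w : Metric.sphere (0 : F) 1 => e.symm w.1 :=
      e.symm.continuous.comp continuous_subtype_val
    refine Continuous.smul (hc.norm.inv₀ fun w => ?_) hc
    have hw1 : ‖(w : F)‖ = 1 := mem_sphere_zero_iff_norm.mp w.2
    have hw : (w : F) ≠ 0 := fun h => by rw [h] at hw1; simp at hw1
    exact norm_ne_zero_iff.mpr fun h => hw (by simpa using congrArg e h)

/-- for `K = ∂Δ^{m-1}` (faces: proper subsets of `{1,…,m}`), the
moment-angle complex `Z_K` is homeomorphic to the unit sphere `S^{2m-1} ⊆ ℂ^m`. -/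
theorem momentAngle_boundary_simplex_homeo_sphere (m : ℕ) (hm : 1 ≤ m) :
    Nonempty ((momentAngle {σ : Finset (Fin m) | σ ≠ Finset.univ}) ≃ₜ
      (Metric.sphere (0 : EuclideanSpace ℂ (Fin m)) 1)) := by
  refine ⟨(Homeomorph.setCongr (momentAngle_eq m hm)).trans ?_⟩
  exact sphereHomeoCLE
    { (PiLp.continuousLinearEquiv 2 ℂ (fun _ : Fin m => ℂ)).symm.toLinearEquiv.restrictScalars ℝ with
      continuous_toFun := (PiLp.continuousLinearEquiv 2 ℂ (fun _ : Fin m => ℂ)).symm.continuous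
      continuous_invFun := (PiLp.continuousLinearEquiv 2 ℂ (fun _ : Fin m => ℂ)).continuous }
end

section
/- Let K = ∂Δ^{m-1}, so k(K) = k[v_1,…,v_m]/(v_1⋯v_m). In the Koszul dg-algebra k(K) ⊗ Λ[u_1,…,u_m] with d(u_i) = v_i, the element v_1 v_2 ⋯ v_{m−1} ⊗ u_m is a cocycle of total degree 2m−1 representing a nonzero cohomology class; moreover the total cohomology is 2-dimensional over k, spanned by the classes of 1 and v_1⋯v_{m−1} ⊗ u_m. -/
open MvPolynomial

set_option maxHeartbeats 1000000
set_option synthInstance.maxHeartbeats 400000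

/-- The Stanley–Reisner ideal of a simplicial complex `K` on `{1,…,m}`. -/
noncomputable def srIdeal (k : Type) [Field k] {m : ℕ}
    (K : Set (Finset (Fin m))) : Ideal (MvPolynomial (Fin m) k) :=
  Ideal.span {p | ∃ I : Finset (Fin m), I ∉ K ∧ p = ∏ i ∈ I, X i}

/-- The Stanley–Reisner ring `k(K) = k[v_1,…,v_m]/I_K`. -/
noncomputable abbrev srRing (k : Type) [Field k] {m : ℕ} (K : Set (Finset (Fin m))) :=
  MvPolynomial (Fin m) k ⧸ srIdeal k K

/-- The underlying module of the Koszul complex `k(K) ⊗ Λ[u_1,…,u_m]`: formal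
`k(K)`-linear combinations of exterior monomials `u_S`, `S ⊆ {1,…,m}`. -/
noncomputable abbrev koszulModule (k : Type) [Field k] {m : ℕ}
    (K : Set (Finset (Fin m))) := Finset (Fin m) →₀ srRing k K

/-- The Koszul differential, the derivation determined by `d u_i = v_i`, `d v_i = 0`:
`d (x ⊗ u_S) = ∑_{i ∈ S} ±(v_i x) ⊗ u_{S \ i}`. -/
noncomputable def koszulD (k : Type) [Field k] {m : ℕ} (K : Set (Finset (Fin m))) :
    koszulModule k K →ₗ[k] koszulModule k K :=
  Finsupp.lsum k fun S => ∑ i ∈ S,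
    ((-1 : k) ^ (S.filter (· < i)).card) •
      ((Finsupp.lsingle (S.erase i)).comp
        (LinearMap.mulLeft k (Ideal.Quotient.mk (srIdeal k K) (X i))))

/-- The component of total degree `n` of `k(K) ⊗ Λ[u_1,…,u_m]`
(`deg v_l = 2`, `deg u_l = 1`): spanned by the `x ⊗ u_S` with `x` a monomial and
`2 deg x + |S| = n`. -/
noncomputable def koszulTcomp (k : Type) [Field k] {m : ℕ} (K : Set (Finset (Fin m)))
    (n : ℕ) : Submodule k (koszulModule k K) :=
  Submodule.span k {f | ∃ (S : Finset (Fin m)) (d : Fin m →₀ ℕ),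
    2 * (d.sum fun _ e => e) + S.card = n ∧
    f = Finsupp.single S (Ideal.Quotient.mk (srIdeal k K) (monomial d (1 : k)))}

/-- Cocycles of total degree `n`. -/
noncomputable def koszulZ (k : Type) [Field k] {m : ℕ} (K : Set (Finset (Fin m)))
    (n : ℕ) : Submodule k (koszulModule k K) :=
  koszulTcomp k K n ⊓ LinearMap.ker (koszulD k K)

/-- Coboundaries of total degree `n` (the differential raises total degree by one). -/
noncomputable def koszulB (k : Type) [Field k] {m : ℕ} (K : Set (Finset (Fin m)))
    (n : ℕ) : Submodule k (koszulModule k K) :=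
  Submodule.map (koszulD k K) (koszulTcomp k K (n - 1))

/-- Cohomology of the Koszul dg-algebra `[k(K) ⊗ Λ[u_1,…,u_m], d]` in total degree `n`,
realized as the image of the cocycles in the quotient by the coboundaries. -/
noncomputable def koszulH (k : Type) [Field k] {m : ℕ} (K : Set (Finset (Fin m)))
    (n : ℕ) : Submodule k (koszulModule k K ⧸ koszulB k K n) :=
  Submodule.map (koszulB k K n).mkQ (koszulZ k K n)



namespace KAux
variable (k : Type) [Field k] (m : ℕ)

abbrev P := MvPolynomial (Fin (m+1)) k
abbrev Mup := Finset (Fin (m+1)) →₀ P k m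

noncomputable def e (S : Finset (Fin (m+1))) (a : Fin (m+1) →₀ ℕ) : Mup k m :=
  Finsupp.single S (monomial a 1)

noncomputable def D : Mup k m →ₗ[k] Mup k m :=
  Finsupp.lsum k fun S => ∑ i ∈ S,
    ((-1 : k) ^ (S.filter (· < i)).card) •
      ((Finsupp.lsingle (S.erase i)).comp (LinearMap.mulLeft k (X i)))

lemma D_single (S : Finset (Fin (m+1))) (p : P k m) :
    D k m (Finsupp.single S p) = ∑ i ∈ S,
      ((-1 : k) ^ (S.filter (· < i)).card) •
        Finsupp.single (S.erase i) (X i * p) := by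
  rw [D, Finsupp.lsum_single, LinearMap.sum_apply]
  refine Finset.sum_congr rfl fun i hi => ?_
  simp [LinearMap.smul_apply]

lemma X_mul_monomial_one (i : Fin (m+1)) (a : Fin (m+1) →₀ ℕ) :
    (X i : P k m) * monomial a 1 = monomial (Finsupp.single i 1 + a) 1 := by
  rw [X, monomial_mul, one_mul]

lemma D_e (S : Finset (Fin (m+1))) (a : Fin (m+1) →₀ ℕ) :
    D k m (e k m S a) = ∑ i ∈ S,
      ((-1 : k) ^ (S.filter (· < i)).card) • e k m (S.erase i) (Finsupp.single i 1 + a) := by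
  rw [e, D_single]
  refine Finset.sum_congr rfl fun i hi => ?_
  rw [X_mul_monomial_one, e]

noncomputable def sVal (S : Finset (Fin (m+1))) (a : Fin (m+1) →₀ ℕ) : Mup k m :=
  if h : (a.support ∪ S).Nonempty then
    (if (a.support ∪ S).min' h ∈ S then 0
     else e k m (insert ((a.support ∪ S).min' h) S) (a - Finsupp.single ((a.support ∪ S).min' h) 1))
  else 0

noncomputable def hs : Mup k m →ₗ[k] Mup k m :=
  Finsupp.lsum k fun S => (basisMonomials (Fin (m+1)) k).constr k (sVal k m S)

lemma hs_e (S : Finset (Fin (m+1))) (a : Fin (m+1) →₀ ℕ) :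
    hs k m (e k m S a) = sVal k m S a := by
  rw [hs, e, Finsupp.lsum_single]
  have : (monomial a (1:k) : P k m) = basisMonomials (Fin (m+1)) k a := by
    rw [coe_basisMonomials]
  rw [this, Module.Basis.constr_basis]

noncomputable def Pi0 : Mup k m →ₗ[k] Mup k m :=
  LinearMap.smulRight ((lcoeff k 0).comp (Finsupp.lapply ∅)) (e k m ∅ 0)

lemma Pi0_e (S : Finset (Fin (m+1))) (a : Fin (m+1) →₀ ℕ) :
    Pi0 k m (e k m S a) = if S = ∅ ∧ a = 0 then e k m ∅ 0 else 0 := by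
  rw [Pi0, LinearMap.smulRight_apply, LinearMap.comp_apply, Finsupp.lapply_apply, e,
    Finsupp.single_apply]
  rcases eq_or_ne S ∅ with hS | hS
  · subst hS
    rcases eq_or_ne a 0 with ha | ha
    · subst ha; simp
    · simp [ha, coeff_monomial, eq_comm (a := (0 : Fin (m+1) →₀ ℕ))]
  · simp [hS, Ne.symm hS]

section minfacts
variable {m}

lemma mem_support_single_add {i x : Fin (m+1)} {a : Fin (m+1) →₀ ℕ} :
    x ∈ (Finsupp.single i 1 + a).support ↔ x = i ∨ x ∈ a.support := by
  simp only [Finsupp.mem_support_iff, Finsupp.add_apply, Finsupp.single_apply]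
  rcases eq_or_ne x i with h | h
  · subst h; simp
  · simp [Ne.symm h, h]

lemma single_le_of_mem_support {j : Fin (m+1)} {a : Fin (m+1) →₀ ℕ} (h : j ∈ a.support) :
    Finsupp.single j 1 ≤ a := by
  rw [Finsupp.single_le_iff]
  exact Nat.one_le_iff_ne_zero.2 (Finsupp.mem_support_iff.1 h)

end minfacts

variable {k m}

lemma sVal_of_mem {S : Finset (Fin (m+1))} {a : Fin (m+1) →₀ ℕ} {j : Fin (m+1)}
    (hj : j ∈ a.support ∪ S) (hmin : ∀ x ∈ a.support ∪ S, j ≤ x) (hjS : j ∈ S) :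
    sVal k m S a = 0 := by
  have hU : (a.support ∪ S).Nonempty := ⟨j, hj⟩
  have hm : (a.support ∪ S).min' hU = j :=
    le_antisymm (Finset.min'_le _ _ hj) (Finset.le_min' _ _ _ hmin)
  rw [sVal, dif_pos hU, hm, if_pos hjS]

lemma sVal_of_not_mem {S : Finset (Fin (m+1))} {a : Fin (m+1) →₀ ℕ} {j : Fin (m+1)}
    (hj : j ∈ a.support ∪ S) (hmin : ∀ x ∈ a.support ∪ S, j ≤ x) (hjS : j ∉ S) :
    sVal k m S a = e k m (insert j S) (a - Finsupp.single j 1) := by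
  have hU : (a.support ∪ S).Nonempty := ⟨j, hj⟩
  have hm : (a.support ∪ S).min' hU = j :=
    le_antisymm (Finset.min'_le _ _ hj) (Finset.le_min' _ _ _ hmin)
  rw [sVal, dif_pos hU, hm, if_neg hjS]


lemma sign_min_one {S : Finset (Fin (m+1))} {j : Fin (m+1)}
    (hmin : ∀ x ∈ S, j ≤ x) : (S.filter (· < j)).card = 0 := by
  rw [Finset.card_eq_zero, Finset.filter_eq_empty_iff]
  intro x hx
  exact not_lt.2 (hmin x hx)

lemma sign_insert {S : Finset (Fin (m+1))} {i j : Fin (m+1)} (hi : i ∈ S)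
    (hj : j ∉ S) (hji : j ≤ i) :
    ((insert j S).filter (· < i)).card = (S.filter (· < i)).card + 1 := by
  have hjilt : j < i := lt_of_le_of_ne hji (fun h => hj (h ▸ hi))
  rw [Finset.filter_insert, if_pos hjilt,
    Finset.card_insert_of_notMem (fun h => hj (Finset.mem_of_mem_filter _ h))]

lemma homotopy_e (S : Finset (Fin (m+1))) (a : Fin (m+1) →₀ ℕ) :
    D k m (hs k m (e k m S a)) + hs k m (D k m (e k m S a))
      = e k m S a - Pi0 k m (e k m S a) := by
  rw [Pi0_e, hs_e, D_e, map_sum]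
  simp only [map_smul, hs_e]
  by_cases hU : (a.support ∪ S).Nonempty
  · set j := (a.support ∪ S).min' hU with hjdef
    have hjU : j ∈ a.support ∪ S := Finset.min'_mem _ hU
    have hmin : ∀ x ∈ a.support ∪ S, j ≤ x := fun x hx => Finset.min'_le _ _ hx
    have hminS : ∀ x ∈ S, j ≤ x := fun x hx => hmin x (Finset.mem_union_right _ hx)
    have hne : ¬(S = ∅ ∧ a = 0) := by
      rintro ⟨h1, h2⟩
      subst h1; subst h2
      simp at hjU
    rw [if_neg hne, sub_zero]
    by_cases hjS : j ∈ S
    · -- minimal index is exterior: s kills e S a, and only the i = j term of s∘d survives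
      rw [sVal_of_mem hjU hmin hjS, map_zero, zero_add]
      rw [Finset.sum_eq_single_of_mem j hjS]
      · -- the term i = j
        have h1 : (S.filter (· < j)).card = 0 := sign_min_one hminS
        have h2 : sVal k m (S.erase j) (Finsupp.single j 1 + a) = e k m S a := by
          have hjmem : j ∈ (Finsupp.single j 1 + a).support ∪ S.erase j :=
            Finset.mem_union_left _ (mem_support_single_add.2 (Or.inl rfl))
          have hminn : ∀ x ∈ (Finsupp.single j 1 + a).support ∪ S.erase j, j ≤ x := by
            intro x hx
            rcases Finset.mem_union.1 hx with hx | hx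
            · rcases mem_support_single_add.1 hx with rfl | hx
              · exact le_refl _
              · exact hmin x (Finset.mem_union_left _ hx)
            · exact hminS x (Finset.mem_of_mem_erase hx)
          rw [sVal_of_not_mem hjmem hminn (Finset.notMem_erase _ _),
            Finset.insert_erase hjS, add_tsub_cancel_left]
        rw [h1, h2, pow_zero, one_smul]
      · -- other terms die
        intro i hiS hij
        have hjmem : j ∈ (Finsupp.single i 1 + a).support ∪ S.erase i :=
          Finset.mem_union_right _ (Finset.mem_erase.2 ⟨Ne.symm hij, hjS⟩)
        have hminn : ∀ x ∈ (Finsupp.single i 1 + a).support ∪ S.erase i, j ≤ x := by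
          intro x hx
          rcases Finset.mem_union.1 hx with hx | hx
          · rcases mem_support_single_add.1 hx with rfl | hx
            · exact hminS _ hiS
            · exact hmin x (Finset.mem_union_left _ hx)
          · exact hminS x (Finset.mem_of_mem_erase hx)
        rw [sVal_of_mem hjmem hminn (Finset.mem_erase.2 ⟨Ne.symm hij, hjS⟩), smul_zero]
    · -- minimal index comes from a
      have hja : j ∈ a.support := by
        rcases Finset.mem_union.1 hjU with h | h
        · exact h
        · exact absurd h hjS
      have hsle : Finsupp.single j 1 ≤ a := single_le_of_mem_support hja
      rw [sVal_of_not_mem hjU hmin hjS, D_e, Finset.sum_insert hjS]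
      -- the i = j term of d∘s gives e S a
      have hterm : ((insert j S).filter (· < j)).card = 0 := by
        apply sign_min_one
        intro x hx
        rcases Finset.mem_insert.1 hx with rfl | hx
        · exact le_refl _
        · exact hminS x hx
      rw [hterm, pow_zero, one_smul, Finset.erase_insert hjS, add_tsub_cancel_of_le hsle]
      -- remaining terms cancel pairwise
      have hcancel : ∀ i ∈ S,
          ((-1:k) ^ ((insert j S).filter (· < i)).card •
              e k m ((insert j S).erase i) (Finsupp.single i 1 + (a - Finsupp.single j 1)))
            = -(((-1:k) ^ (S.filter (· < i)).card) •
              sVal k m (S.erase i) (Finsupp.single i 1 + a)) := by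
        intro i hiS
        have hij : j ≠ i := fun h => hjS (h ▸ hiS)
        have hjmem : j ∈ (Finsupp.single i 1 + a).support ∪ S.erase i :=
          Finset.mem_union_left _ (mem_support_single_add.2 (Or.inr hja))
        have hminn : ∀ x ∈ (Finsupp.single i 1 + a).support ∪ S.erase i, j ≤ x := by
          intro x hx
          rcases Finset.mem_union.1 hx with hx | hx
          · rcases mem_support_single_add.1 hx with rfl | hx
            · exact hminS _ hiS
            · exact hmin x (Finset.mem_union_left _ hx)
          · exact hminS x (Finset.mem_of_mem_erase hx)
        have hjSe : j ∉ S.erase i := fun h => hjS (Finset.mem_of_mem_erase h)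
        rw [sVal_of_not_mem hjmem hminn hjSe]
        rw [sign_insert hiS hjS (hminS i hiS)]
        rw [Finset.erase_insert_of_ne hij]
        have hexp : Finsupp.single i 1 + (a - Finsupp.single j 1)
            = Finsupp.single i 1 + a - Finsupp.single j 1 :=
          (add_tsub_assoc_of_le hsle _).symm
        rw [hexp, pow_succ, mul_comm, neg_one_mul, neg_smul]
      rw [Finset.sum_congr rfl hcancel, Finset.sum_neg_distrib]
      abel
  · -- a = 0, S = ∅
    rw [Finset.not_nonempty_iff_eq_empty, Finset.union_eq_empty] at hU
    obtain ⟨ha, hS⟩ := hU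
    have ha0 : a = 0 := by
      ext x; simpa [Finsupp.mem_support_iff] using (Finset.eq_empty_iff_forall_notMem.1 ha x)
    subst hS
    subst ha0
    rw [if_pos ⟨rfl, rfl⟩, sub_self, Finset.sum_empty, add_zero]
    rw [sVal]
    simp


/-- extensionality on the monomial basis of `Mup` -/
lemma ext_basis {F G : Mup k m →ₗ[k] Mup k m}
    (h : ∀ S a, F (e k m S a) = G (e k m S a)) : F = G := by
  apply Finsupp.lhom_ext
  intro S p
  induction p using MvPolynomial.induction_on' with
  | monomial a c =>
    have h2 : (monomial a c : P k m) = c • monomial a 1 := by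
      rw [smul_monomial, smul_eq_mul, mul_one]
    rw [h2, ← Finsupp.smul_single, map_smul, map_smul]
    exact congrArg (fun y => c • y) (h S a)
  | add p q hp hq =>
    have : (Finsupp.single S (p + q) : Mup k m)
        = Finsupp.single S p + Finsupp.single S q := Finsupp.single_add S p q
    rw [this, map_add, map_add, hp, hq]

lemma erase_erase (i l : Fin (m+1)) (S : Finset (Fin (m+1))) :
    (S.erase i).erase l = (S.erase l).erase i := by
  ext x
  simp only [Finset.mem_erase]
  tauto

lemma sign_pair {S : Finset (Fin (m+1))} {i l : Fin (m+1)} (hi : i ∈ S) (hl : l ∈ S)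
    (hli : l < i) :
    ((-1:k) ^ (S.filter (· < i)).card * (-1) ^ ((S.erase i).filter (· < l)).card)
      = -((-1:k) ^ (S.filter (· < l)).card * (-1) ^ ((S.erase l).filter (· < i)).card) := by
  have e1 : ((S.erase i).filter (· < l)).card = (S.filter (· < l)).card := by
    rw [Finset.filter_erase, Finset.erase_eq_of_notMem]
    intro hmem
    exact absurd (Finset.mem_filter.1 hmem).2 (not_lt.2 hli.le)
  have hlf : l ∈ S.filter (· < i) := Finset.mem_filter.2 ⟨hl, hli⟩
  have e2 : ((S.erase l).filter (· < i)).card = (S.filter (· < i)).card - 1 := by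
    rw [Finset.filter_erase, Finset.card_erase_of_mem hlf]
  obtain ⟨t, ht⟩ : ∃ t, (S.filter (· < i)).card = t + 1 :=
    ⟨(S.filter (· < i)).card - 1, (Nat.succ_pred_eq_of_pos (Finset.card_pos.2 ⟨l, hlf⟩)).symm⟩
  rw [e1, e2, ht]
  simp only [Nat.add_sub_cancel, pow_succ]
  ring

lemma D_D_e (S : Finset (Fin (m+1))) (a : Fin (m+1) →₀ ℕ) :
    D k m (D k m (e k m S a)) = 0 := by
  rw [D_e, map_sum]
  simp only [map_smul, D_e, Finset.smul_sum, smul_smul]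
  rw [Finset.sum_sigma' S (fun i => S.erase i)
    (fun i l => ((-1:k) ^ (S.filter (· < i)).card
      * (-1) ^ ((S.erase i).filter (· < l)).card) •
      e k m ((S.erase i).erase l) (Finsupp.single l 1 + (Finsupp.single i 1 + a)))]
  refine Finset.sum_involution (fun p _ => ⟨p.2, p.1⟩) ?_ ?_ ?_ ?_
  · rintro ⟨i, l⟩ hp
    rw [Finset.mem_sigma] at hp
    obtain ⟨hi, hl'⟩ := hp
    have hl : l ∈ S := Finset.mem_of_mem_erase hl'
    have hne : l ≠ i := (Finset.mem_erase.1 hl').1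
    have hbase : ((S.erase i).erase l) = ((S.erase l).erase i) := erase_erase i l S
    have hexp : (Finsupp.single l 1 + (Finsupp.single i 1 + a))
        = (Finsupp.single i 1 + (Finsupp.single l 1 + a)) := by
      rw [← add_assoc, ← add_assoc, add_comm (Finsupp.single l 1) (Finsupp.single i 1)]
    have hsg : ((-1:k) ^ (S.filter (· < i)).card * (-1) ^ ((S.erase i).filter (· < l)).card)
        = -((-1:k) ^ (S.filter (· < l)).card * (-1) ^ ((S.erase l).filter (· < i)).card) := by
      rcases lt_or_gt_of_ne hne with h | h
      · exact sign_pair hi hl h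
      · rw [sign_pair hl hi h]; ring
    show _ • e k m ((S.erase i).erase l) _ + _ • e k m ((S.erase l).erase i) _ = 0
    rw [hbase, hexp, hsg, neg_smul, neg_add_cancel]
  · rintro ⟨i, l⟩ hp _
    rw [Finset.mem_sigma] at hp
    intro heq
    have : l = i := congrArg Sigma.fst heq
    exact (Finset.mem_erase.1 hp.2).1 this
  · rintro ⟨i, l⟩ hp
    rw [Finset.mem_sigma] at hp ⊢
    have hl : l ∈ S := Finset.mem_of_mem_erase hp.2
    exact ⟨hl, Finset.mem_erase.2 ⟨fun h => (Finset.mem_erase.1 hp.2).1 h.symm, hp.1⟩⟩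
  · rintro ⟨i, l⟩ hp
    rfl

lemma D_D : (D k m) ∘ₗ (D k m) = 0 :=
  ext_basis fun S a => by
    rw [LinearMap.comp_apply, D_D_e, LinearMap.zero_apply]

lemma homotopy : (D k m) ∘ₗ (hs k m) + (hs k m) ∘ₗ (D k m)
    = LinearMap.id - Pi0 k m :=
  ext_basis fun S a => by
    rw [LinearMap.add_apply, LinearMap.comp_apply, LinearMap.comp_apply,
      LinearMap.sub_apply, LinearMap.id_apply, homotopy_e]

lemma homotopy_apply (x : Mup k m) :
    D k m (hs k m x) + hs k m (D k m x) = x - Pi0 k m x := by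
  have := congrArg (fun F => F x) (homotopy (k := k) (m := m))
  simpa using this


/-- sum of the values of a `Finsupp`, i.e. total degree of the monomial exponent -/
noncomputable def dsum (a : Fin (m+1) →₀ ℕ) : ℕ := a.sum fun _ e => e

lemma dsum_add (a b : Fin (m+1) →₀ ℕ) : dsum (a + b) = dsum a + dsum b := by
  unfold dsum
  exact Finsupp.sum_add_index' (fun _ => rfl) (fun _ _ _ => rfl)

lemma dsum_single (i : Fin (m+1)) (c : ℕ) : dsum (Finsupp.single i c) = c := by
  unfold dsum
  rw [Finsupp.sum_single_index]
  rfl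

lemma dsum_eq_zero {a : Fin (m+1) →₀ ℕ} (h : dsum a = 0) : a = 0 := by
  unfold dsum at h
  rw [Finsupp.sum, Finset.sum_eq_zero_iff] at h
  ext x
  rcases eq_or_ne (a x) 0 with h0 | h0
  · simp [h0]
  · exact absurd (h x (Finsupp.mem_support_iff.2 h0)) h0

variable (k m)

/-- homogeneous component of total degree n, upstairs -/
noncomputable def Tup (n : ℕ) : Submodule k (Mup k m) :=
  Submodule.span k {f | ∃ S a, 2 * dsum a + S.card = n ∧ f = e k m S a}

variable {k m}

lemma e_mem_Tup {S : Finset (Fin (m+1))} {a : Fin (m+1) →₀ ℕ} {n : ℕ}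
    (h : 2 * dsum a + S.card = n) : e k m S a ∈ Tup k m n :=
  Submodule.subset_span ⟨S, a, h, rfl⟩

lemma charTup {n : ℕ} {x : Mup k m} (hx : x ∈ Tup k m n) :
    ∀ S a, 2 * dsum a + S.card ≠ n → coeff a (x S) = 0 := by
  refine Submodule.span_induction ?_ ?_ ?_ ?_ hx
  · rintro x ⟨S', a', hd, rfl⟩ S a hne
    rw [e, Finsupp.single_apply]
    rcases eq_or_ne S' S with rfl | h
    · rw [if_pos rfl, coeff_monomial]
      rcases eq_or_ne a' a with rfl | h2
      · exact absurd hd hne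
      · rw [if_neg h2]
    · rw [if_neg h, coeff_zero]
  · intro S a _
    rw [Finsupp.zero_apply, coeff_zero]
  · intro x y _ _ hx hy S a hne
    rw [Finsupp.add_apply, coeff_add, hx S a hne, hy S a hne, add_zero]
  · intro c x _ hx S a hne
    rw [Finsupp.smul_apply, coeff_smul, hx S a hne, smul_zero]

lemma memTup_of_coeff {n : ℕ} {x : Mup k m}
    (h : ∀ S a, 2 * dsum a + S.card ≠ n → coeff a (x S) = 0) : x ∈ Tup k m n := by
  have hx : x = ∑ S ∈ x.support, Finsupp.single S (x S) := by
    conv_lhs => rw [← Finsupp.sum_single x]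
    rfl
  rw [hx]
  refine Submodule.sum_mem _ fun S _ => ?_
  have hsingle : (Finsupp.single S (x S) : Mup k m)
      = ∑ a ∈ (x S).support, (coeff a (x S)) • e k m S a := by
    conv_lhs => rw [← support_sum_monomial_coeff (x S)]
    have hmap := map_sum (Finsupp.lsingle S : P k m →ₗ[k] Mup k m)
      (fun v => monomial v (coeff v (x S))) (x S).support
    simp only [Finsupp.lsingle_apply] at hmap
    rw [hmap]
    refine Finset.sum_congr rfl fun a _ => ?_
    rw [e, Finsupp.smul_single, smul_monomial, smul_eq_mul, mul_one]
  rw [hsingle]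
  refine Submodule.sum_mem _ fun a ha => ?_
  rcases eq_or_ne (2 * dsum a + S.card) n with hd | hd
  · exact Submodule.smul_mem _ _ (e_mem_Tup hd)
  · exact absurd (h S a hd) (Finsupp.mem_support_iff.1 ha)

lemma mapsTup {F : Mup k m →ₗ[k] Mup k m} {n n' : ℕ}
    (hg : ∀ S a, 2 * dsum a + S.card = n → F (e k m S a) ∈ Tup k m n') :
    ∀ x ∈ Tup k m n, F x ∈ Tup k m n' := by
  intro x hx
  refine Submodule.span_induction ?_ ?_ ?_ ?_ hx
  · rintro y ⟨S, a, hd, rfl⟩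
    exact hg S a hd
  · rw [map_zero]; exact Submodule.zero_mem _
  · intro y z _ _ hy hz
    rw [map_add]; exact Submodule.add_mem _ hy hz
  · intro c y _ hy
    rw [map_smul]; exact Submodule.smul_mem _ _ hy

lemma D_memTup {n : ℕ} {x : Mup k m} (hx : x ∈ Tup k m n) : D k m x ∈ Tup k m (n + 1) := by
  refine mapsTup (fun S a hd => ?_) x hx
  rw [D_e]
  refine Submodule.sum_mem _ fun i hi => ?_
  refine Submodule.smul_mem _ _ (e_mem_Tup ?_)
  rw [dsum_add, dsum_single, Finset.card_erase_of_mem hi]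
  have hc : 1 ≤ S.card := Finset.card_pos.2 ⟨i, hi⟩
  omega

lemma hs_memTup {n : ℕ} {x : Mup k m} (hx : x ∈ Tup k m n) : hs k m x ∈ Tup k m (n - 1) := by
  refine mapsTup (fun S a hd => ?_) x hx
  rw [hs_e, sVal]
  split_ifs with h1 h2
  · exact Submodule.zero_mem _
  · set j := (a.support ∪ S).min' h1 with hj
    have hja : j ∈ a.support := by
      rcases Finset.mem_union.1 (Finset.min'_mem _ h1) with h | h
      · exact h
      · exact absurd h h2
    have hle : Finsupp.single j 1 ≤ a := single_le_of_mem_support hja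
    refine e_mem_Tup ?_
    have hrec : dsum (a - Finsupp.single j 1) + dsum (Finsupp.single j 1) = dsum a := by
      rw [← dsum_add, tsub_add_cancel_of_le hle]
    rw [dsum_single] at hrec
    rw [Finset.card_insert_of_notMem h2]
    omega
  · exact Submodule.zero_mem _

lemma Pi0_eq_zero {n : ℕ} {x : Mup k m} (hx : x ∈ Tup k m n) (hn : n ≠ 0) :
    Pi0 k m x = 0 := by
  rw [Pi0, LinearMap.smulRight_apply, LinearMap.comp_apply, Finsupp.lapply_apply, lcoeff_apply]
  rw [charTup hx ∅ 0 (by simpa [dsum] using Ne.symm hn), zero_smul]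

/-- the exponent of the monomial v₁⋯v_{m+1} -/
noncomputable def uOne : Fin (m+1) →₀ ℕ := ∑ i : Fin (m+1), Finsupp.single i 1

lemma dsum_sum_single (T : Finset (Fin (m+1))) :
    dsum (∑ i ∈ T, Finsupp.single i 1) = T.card := by
  induction T using Finset.induction_on with
  | empty => simp [dsum]
  | insert i T hnotmem ih =>
    rw [Finset.sum_insert hnotmem, dsum_add, dsum_single, ih,
      Finset.card_insert_of_notMem hnotmem, add_comm]

lemma dsum_uOne : dsum (uOne : Fin (m+1) →₀ ℕ) = m + 1 := by
  rw [uOne, dsum_sum_single, Finset.card_univ, Fintype.card_fin]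

lemma prod_X_eq (T : Finset (Fin (m+1))) :
    (∏ i ∈ T, (X i : P k m)) = monomial (∑ i ∈ T, Finsupp.single i 1) 1 := by
  induction T using Finset.induction_on with
  | empty => simp
  | insert i T hnotmem ih =>
    rw [Finset.prod_insert hnotmem, Finset.sum_insert hnotmem, ih, X_mul_monomial_one]

/-- the polynomial v₁⋯v_{m+1} -/
noncomputable def bigF : P k m := monomial uOne 1

lemma bigF_eq_prod : (bigF : P k m) = ∏ i : Fin (m+1), X i := by
  rw [bigF, prod_X_eq, uOne]

variable (k m) in
noncomputable def mulF : Mup k m →ₗ[k] Mup k m :=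
  Finsupp.mapRange.linearMap (LinearMap.mulLeft k (bigF))

lemma mulF_apply (y : Mup k m) (S : Finset (Fin (m+1))) :
    (mulF k m y) S = bigF * y S := by
  rw [mulF, Finsupp.mapRange.linearMap_apply, Finsupp.mapRange_apply, LinearMap.mulLeft_apply]

lemma mulF_e (S : Finset (Fin (m+1))) (a : Fin (m+1) →₀ ℕ) :
    mulF k m (e k m S a) = e k m S (uOne + a) := by
  rw [mulF, e, Finsupp.mapRange.linearMap_apply, Finsupp.mapRange_single,
    LinearMap.mulLeft_apply, bigF, monomial_mul, one_mul, e]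

lemma coeff_mulF (y : Mup k m) (S : Finset (Fin (m+1))) (a : Fin (m+1) →₀ ℕ) :
    coeff (uOne + a) ((mulF k m y) S) = coeff a (y S) := by
  rw [mulF_apply, bigF, coeff_monomial_mul, one_mul]

lemma mulF_inj {y : Mup k m} (h : mulF k m y = 0) : y = 0 := by
  ext S a
  have := coeff_mulF (k := k) (m := m) y S a
  rw [h] at this
  simp only [Finsupp.zero_apply, coeff_zero] at this ⊢
  exact this.symm

lemma mulF_memTup {n : ℕ} {x : Mup k m} (hx : x ∈ Tup k m n) :
    mulF k m x ∈ Tup k m (n + 2 * (m + 1)) := by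
  refine mapsTup (fun S a hd => ?_) x hx
  rw [mulF_e]
  refine e_mem_Tup ?_
  rw [dsum_add, dsum_uOne]
  omega

lemma mulF_D_comm : (D k m) ∘ₗ (mulF k m) = (mulF k m) ∘ₗ (D k m) :=
  ext_basis fun S a => by
    rw [LinearMap.comp_apply, LinearMap.comp_apply, mulF_e, D_e, D_e, map_sum]
    refine Finset.sum_congr rfl fun i hi => ?_
    rw [map_smul, mulF_e, add_left_comm]

lemma mulF_low {t : ℕ} {z : Mup k m} (h : mulF k m z ∈ Tup k m t) (ht : t < 2 * (m + 1)) :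
    z = 0 := by
  ext S a
  have h2 : 2 * dsum (uOne + a) + S.card ≠ t := by
    rw [dsum_add, dsum_uOne]
    omega
  have := charTup h S (uOne + a) h2
  rw [coeff_mulF] at this
  simpa using this

lemma mulF_deg {t : ℕ} {z : Mup k m} (h : mulF k m z ∈ Tup k m t) (ht : 2 * (m + 1) ≤ t) :
    z ∈ Tup k m (t - 2 * (m + 1)) := by
  refine memTup_of_coeff fun S a hne => ?_
  have h2 : 2 * dsum (uOne + a) + S.card ≠ t := by
    rw [dsum_add, dsum_uOne]
    omega
  have := charTup h S (uOne + a) h2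
  rwa [coeff_mulF] at this

lemma Tup_zero_eq {z : Mup k m} (hz : z ∈ Tup k m 0) :
    z = (coeff 0 (z ∅)) • e k m ∅ 0 := by
  ext S a
  rw [Finsupp.smul_apply, e, Finsupp.single_apply]
  rcases eq_or_ne S ∅ with rfl | hS
  · rw [if_pos rfl, coeff_smul, coeff_monomial]
    rcases eq_or_ne a 0 with rfl | ha
    · rw [if_pos rfl, smul_eq_mul, mul_one]
    · rw [if_neg (Ne.symm ha), smul_eq_mul, mul_zero]
      refine charTup hz ∅ a ?_
      simp only [Finset.card_empty, add_zero]
      intro hcon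
      exact ha (dsum_eq_zero (by omega))
  · rw [if_neg (Ne.symm hS), smul_zero, coeff_zero]
    refine charTup hz S a ?_
    have : S.card ≠ 0 := fun h => hS (Finset.card_eq_zero.1 h)
    omega


section Down
variable (k : Type) [Field k] (m : ℕ)

abbrev K0 : Set (Finset (Fin (m+1))) := {σ : Finset (Fin (m+1)) | σ ≠ Finset.univ}

lemma srIdeal_eq : srIdeal k (K0 m) = Ideal.span {(bigF : P k m)} := by
  unfold srIdeal
  congr 1
  ext p
  constructor
  · rintro ⟨I, hI, rfl⟩
    have hIu : I = Finset.univ := by simpa [K0] using hI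
    subst hIu
    rw [Set.mem_singleton_iff, bigF_eq_prod]
  · intro hp
    rw [Set.mem_singleton_iff] at hp
    exact ⟨Finset.univ, by simp [K0], by rw [hp, bigF_eq_prod]⟩

lemma bigF_ne_zero : (bigF : P k m) ≠ 0 := fun h => by
  simpa using (monomial_eq_zero).1 h

lemma bigF_mem : (bigF : P k m) ∈ srIdeal k (K0 m) := by
  rw [srIdeal_eq]
  exact Ideal.mem_span_singleton_self _

noncomputable def rho : Mup k m →ₗ[k] koszulModule k (K0 m) :=
  Finsupp.mapRange.linearMap (Ideal.Quotient.mkₐ k (srIdeal k (K0 m))).toLinearMap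

lemma rho_single (S : Finset (Fin (m+1))) (p : P k m) :
    rho k m (Finsupp.single S p)
      = Finsupp.single S (Ideal.Quotient.mk (srIdeal k (K0 m)) p) := by
  rw [rho, Finsupp.mapRange.linearMap_apply, Finsupp.mapRange_single]
  rfl

lemma rho_apply (y : Mup k m) (S : Finset (Fin (m+1))) :
    (rho k m y) S = Ideal.Quotient.mk (srIdeal k (K0 m)) (y S) := by
  rw [rho, Finsupp.mapRange.linearMap_apply, Finsupp.mapRange_apply]
  rfl

lemma koszulD_single (K : Set (Finset (Fin (m+1)))) (S : Finset (Fin (m+1)))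
    (r : srRing k K) :
    koszulD k K (Finsupp.single S r) = ∑ i ∈ S,
      ((-1 : k) ^ (S.filter (· < i)).card) •
        Finsupp.single (S.erase i) (Ideal.Quotient.mk (srIdeal k K) (X i) * r) := by
  rw [koszulD, Finsupp.lsum_single, LinearMap.sum_apply]
  refine Finset.sum_congr rfl fun i hi => ?_
  simp [LinearMap.smul_apply]

lemma rho_D : (koszulD k (K0 m)) ∘ₗ (rho k m) = (rho k m) ∘ₗ (D k m) := by
  apply Finsupp.lhom_ext
  intro S p
  rw [LinearMap.comp_apply, LinearMap.comp_apply, rho_single, koszulD_single, D_single,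
    map_sum]
  refine Finset.sum_congr rfl fun i hi => ?_
  rw [map_smul, rho_single, ← map_mul]

lemma rho_D_apply (y : Mup k m) :
    koszulD k (K0 m) (rho k m y) = rho k m (D k m y) :=
  congrArg (fun F => F y) (rho_D k m)

lemma rho_mulF (y : Mup k m) : rho k m (mulF k m y) = 0 := by
  ext S
  rw [rho_apply, mulF_apply, map_mul, Ideal.Quotient.eq_zero_iff_mem.2 (bigF_mem k m),
    zero_mul, Finsupp.zero_apply]

lemma exists_mulF {y : Mup k m} (h : rho k m y = 0) : ∃ z, y = mulF k m z := by
  have hdvd : ∀ S, (bigF : P k m) ∣ y S := by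
    intro S
    have h1 : Ideal.Quotient.mk (srIdeal k (K0 m)) (y S) = 0 := by
      rw [← rho_apply, h, Finsupp.zero_apply]
    rw [Ideal.Quotient.eq_zero_iff_mem, srIdeal_eq, Ideal.mem_span_singleton] at h1
    exact h1
  classical
  refine ⟨Finsupp.mapRange (fun p => if h : (bigF : P k m) ∣ p then h.choose else 0) ?_ y, ?_⟩
  · rw [dif_pos (dvd_zero _)]
    have hspec := (dvd_zero (bigF : P k m)).choose_spec
    rcases mul_eq_zero.1 hspec.symm with h | h
    · exact absurd h (bigF_ne_zero k m)
    · exact h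
  · refine Finsupp.ext fun S => ?_
    rw [mulF_apply, Finsupp.mapRange_apply, dif_pos (hdvd S)]
    exact (hdvd S).choose_spec

lemma Tcomp_eq (n : ℕ) :
    koszulTcomp k (K0 m) n = Submodule.map (rho k m) (Tup k m n) := by
  rw [koszulTcomp, Tup, Submodule.map_span]
  congr 1
  ext x
  constructor
  · rintro ⟨S, d, hd, rfl⟩
    exact ⟨e k m S d, ⟨S, d, hd, rfl⟩, by rw [e, rho_single]⟩
  · rintro ⟨y, ⟨S, d, hd, rfl⟩, rfl⟩
    exact ⟨S, d, hd, by rw [e, rho_single]⟩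

lemma mem_B_of {n : ℕ} {w : Mup k m} (hw : w ∈ Tup k m (n-1)) :
    koszulD k (K0 m) (rho k m w) ∈ koszulB k (K0 m) n := by
  rw [koszulB]
  exact ⟨rho k m w, by rw [Tcomp_eq]; exact ⟨w, hw, rfl⟩, rfl⟩

/-- the exponent of v₁⋯v_m (omitting the last variable) -/
noncomputable def aT : Fin (m+1) →₀ ℕ :=
  ∑ i ∈ Finset.univ.erase (Fin.last m), Finsupp.single i 1

/-- upstairs representative of the fundamental cocycle -/
noncomputable def elemUp : Mup k m := e k m {Fin.last m} (aT m)

lemma single_last_add_aT : Finsupp.single (Fin.last m) 1 + aT m = (uOne : Fin (m+1) →₀ ℕ) := by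
  rw [aT, uOne]
  exact Finset.add_sum_erase _ (fun i => (Finsupp.single i 1 : Fin (m+1) →₀ ℕ))
    (Finset.mem_univ (Fin.last m))

lemma dsum_aT : dsum (aT m) = m := by
  rw [aT, dsum_sum_single, Finset.card_erase_of_mem (Finset.mem_univ _), Finset.card_univ,
    Fintype.card_fin]
  omega

lemma elemUp_mem : elemUp k m ∈ Tup k m (2*m+1) := by
  refine e_mem_Tup ?_
  rw [dsum_aT, Finset.card_singleton]

lemma D_elemUp : D k m (elemUp k m) = e k m ∅ uOne := by
  rw [elemUp, D_e, Finset.sum_singleton, Finset.filter_singleton,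
    if_neg (lt_irrefl (Fin.last m)), Finset.card_empty, pow_zero, one_smul,
    Finset.erase_singleton, single_last_add_aT]

lemma e_empty_uOne_ne : (e k m ∅ uOne : Mup k m) ≠ 0 := by
  rw [e]
  intro h
  have := Finsupp.single_eq_zero.1 h
  exact bigF_ne_zero k m this

/-- the statement's cocycle -/
noncomputable def elem : koszulModule k (K0 m) :=
  Finsupp.single ({Fin.last m} : Finset (Fin (m + 1)))
    (Ideal.Quotient.mk (srIdeal k (K0 m)) (∏ i ∈ Finset.univ.erase (Fin.last m), X i))

lemma rho_elemUp : rho k m (elemUp k m) = elem k m := by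
  rw [elemUp, e, rho_single, elem, prod_X_eq, aT]

lemma D_D_apply (x : Mup k m) : D k m (D k m x) = 0 := by
  have := congrArg (fun F => F x) (D_D (k := k) (m := m))
  simpa using this

/-- main exactness lemma -/
lemma key {n : ℕ} (hn : 1 ≤ n) {x : koszulModule k (K0 m)}
    (hx : x ∈ koszulTcomp k (K0 m) n) (hdx : koszulD k (K0 m) x = 0) :
    ∃ c : k, x - c • (elem k m) ∈ koszulB k (K0 m) n ∧ (n ≠ 2*m+1 → c = 0) := by
  rw [Tcomp_eq] at hx
  obtain ⟨x', hx', rfl⟩ := hx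
  have hrD : rho k m (D k m x') = 0 := by rw [← rho_D_apply, hdx]
  obtain ⟨z, hz⟩ := exists_mulF k m hrD
  have hDz : D k m z = 0 := by
    apply mulF_inj (k := k) (m := m)
    have h1 : mulF k m (D k m z) = D k m (mulF k m z) :=
      (congrArg (fun F => F z) (mulF_D_comm (k := k) (m := m))).symm
    rw [h1, ← hz, D_D_apply]
  have hzmem : mulF k m z ∈ Tup k m (n+1) := hz ▸ D_memTup hx'
  rcases lt_or_ge (n+1) (2*(m+1)) with hlt | hge
  · -- low degree : z = 0, x' is a cocycle upstairs, hence exact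
    have hz0 : z = 0 := mulF_low hzmem hlt
    have hDx0 : D k m x' = 0 := by rw [hz, hz0, map_zero]
    have hhom := homotopy_apply x'
    rw [hDx0, map_zero, add_zero, Pi0_eq_zero hx' (by omega), sub_zero] at hhom
    refine ⟨0, ?_, fun _ => rfl⟩
    rw [zero_smul, sub_zero, ← hhom, ← rho_D_apply]
    exact mem_B_of k m (hs_memTup hx')
  · rcases eq_or_lt_of_le hge with heq | hgt
    · -- n = 2m+1
      have hn2 : n = 2*m+1 := by omega
      have hz0 : z ∈ Tup k m 0 := by
        have h1 := mulF_deg hzmem (le_of_eq heq)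
        have h0 : n + 1 - 2*(m+1) = 0 := by omega
        rwa [h0] at h1
      set c := coeff 0 (z ∅) with hc
      have hzc : z = c • e k m ∅ 0 := Tup_zero_eq hz0
      have hDx' : D k m x' = c • e k m ∅ uOne := by
        rw [hz, hzc, map_smul, mulF_e, add_zero]
      have hx'' : x' - c • elemUp k m ∈ Tup k m n := by
        refine Submodule.sub_mem _ hx' (Submodule.smul_mem _ _ ?_)
        rw [hn2]
        exact elemUp_mem k m
      have hDx'' : D k m (x' - c • elemUp k m) = 0 := by
        rw [map_sub, map_smul, D_elemUp, hDx', sub_self]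
      have hhom := homotopy_apply (x' - c • elemUp k m)
      rw [hDx'', map_zero, add_zero, Pi0_eq_zero hx'' (by omega), sub_zero] at hhom
      refine ⟨c, ?_, fun h => absurd hn2 h⟩
      have : rho k m (x' - c • elemUp k m) = rho k m x' - c • elem k m := by
        rw [map_sub, map_smul, rho_elemUp]
      rw [← this, ← hhom, ← rho_D_apply]
      exact mem_B_of k m (hs_memTup hx'')
    · -- high degree
      have hzdeg : z ∈ Tup k m (n + 1 - 2*(m+1)) := mulF_deg hzmem (by omega)
      have hhomz := homotopy_apply z
      rw [hDz, map_zero, add_zero, Pi0_eq_zero hzdeg (by omega), sub_zero] at hhomz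
      set w := x' - mulF k m (hs k m z) with hw
      have hDw : D k m w = 0 := by
        rw [hw, map_sub, hz]
        have h1 : D k m (mulF k m (hs k m z)) = mulF k m (D k m (hs k m z)) :=
          congrArg (fun F => F (hs k m z)) (mulF_D_comm (k := k) (m := m))
        rw [h1, ← map_sub]
        have : z - D k m (hs k m z) = 0 := by
          conv_lhs => rw [hhomz]
          rw [sub_self]
        rw [this, map_zero]
      have hwmem : w ∈ Tup k m n := by
        refine Submodule.sub_mem _ hx' ?_
        have h2 := mulF_memTup (hs_memTup hzdeg)
        have h3 : n + 1 - 2*(m+1) - 1 + 2*(m+1) = n := by omega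
        rwa [h3] at h2
      have hhomw := homotopy_apply w
      rw [hDw, map_zero, add_zero, Pi0_eq_zero hwmem (by omega), sub_zero] at hhomw
      refine ⟨0, ?_, fun _ => rfl⟩
      rw [zero_smul, sub_zero]
      have hrw : rho k m w = rho k m x' := by
        rw [hw, map_sub, rho_mulF, sub_zero]
      rw [← hrw, ← hhomw, ← rho_D_apply]
      exact mem_B_of k m (hs_memTup hwmem)

/-- the fundamental cocycle is not a boundary -/
lemma elem_not_bdry : elem k m ∉ koszulB k (K0 m) (2*m+1) := by
  rw [koszulB]
  rintro ⟨w, hw, hDw⟩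
  rw [Tcomp_eq] at hw
  obtain ⟨w', hw', rfl⟩ := hw
  have h1 : rho k m (D k m w' - elemUp k m) = 0 := by
    rw [map_sub, ← rho_D_apply, hDw, rho_elemUp, sub_self]
  obtain ⟨z, hz⟩ := exists_mulF k m h1
  have hdeg : mulF k m z ∈ Tup k m (2*m+1) := by
    rw [← hz]
    refine Submodule.sub_mem _ ?_ (elemUp_mem k m)
    have h2 : 2*m+1-1+1 = 2*m+1 := by omega
    have := D_memTup hw'
    rwa [h2] at this
  have hz0 : z = 0 := mulF_low hdeg (by omega)
  rw [hz0, map_zero] at hz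
  have h3 : D k m w' = elemUp k m := by
    exact sub_eq_zero.1 hz
  have h4 : D k m (D k m w') = e k m ∅ uOne := by rw [h3, D_elemUp]
  rw [D_D_apply] at h4
  exact e_empty_uOne_ne k m h4.symm

lemma dsum_zero : dsum (0 : Fin (m+1) →₀ ℕ) = 0 := by
  unfold dsum
  exact Finsupp.sum_zero_index

lemma uOne_ne_zero : (uOne : Fin (m+1) →₀ ℕ) ≠ 0 := by
  intro h
  have h1 := dsum_uOne (m := m)
  rw [h, dsum_zero] at h1
  omega

lemma not_isUnit_bigF : ¬ IsUnit (bigF : P k m) := by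
  intro h
  have h2 : IsUnit (constantCoeff (bigF : P k m)) := h.map _
  have h3 : constantCoeff (bigF : P k m) = 0 := by
    rw [bigF, constantCoeff_monomial, if_neg (uOne_ne_zero m)]
  rw [h3] at h2
  exact not_isUnit_zero h2

lemma rho_e_uOne : rho k m (e k m ∅ uOne) = 0 := by
  have h : Ideal.Quotient.mk (srIdeal k (K0 m)) (monomial uOne (1:k)) = 0 :=
    Ideal.Quotient.eq_zero_iff_mem.2 (bigF_mem k m)
  rw [e, rho_single, h, Finsupp.single_zero]

lemma D_e_empty (a : Fin (m+1) →₀ ℕ) : D k m (e k m ∅ a) = 0 := by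
  rw [D_e, Finset.sum_empty]

noncomputable def g0 : koszulModule k (K0 m) := rho k m (e k m ∅ 0)

lemma g0_ne_zero : g0 k m ≠ 0 := by
  rw [g0, e, rho_single]
  intro h
  have h1 := Finsupp.single_eq_zero.1 h
  rw [Ideal.Quotient.eq_zero_iff_mem, srIdeal_eq, Ideal.mem_span_singleton] at h1
  have h2 : (monomial (0 : Fin (m+1) →₀ ℕ) (1:k)) = 1 := by
    rw [monomial_zero', C_1]
  rw [h2] at h1
  exact not_isUnit_bigF k m (isUnit_of_dvd_one h1)

lemma elem_in_Z : elem k m ∈ koszulZ k (K0 m) (2*m+1) := by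
  rw [koszulZ, Submodule.mem_inf]
  constructor
  · rw [Tcomp_eq]
    exact ⟨elemUp k m, elemUp_mem k m, rho_elemUp k m⟩
  · rw [LinearMap.mem_ker, ← rho_elemUp, rho_D_apply, D_elemUp, rho_e_uOne]

lemma g0_in_Tcomp : g0 k m ∈ koszulTcomp k (K0 m) 0 := by
  rw [Tcomp_eq]
  refine ⟨e k m ∅ 0, e_mem_Tup ?_, rfl⟩
  rw [dsum_zero, Finset.card_empty]

lemma Tcomp_zero_D {w : koszulModule k (K0 m)} (hw : w ∈ koszulTcomp k (K0 m) 0) :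
    koszulD k (K0 m) w = 0 := by
  rw [Tcomp_eq] at hw
  obtain ⟨w', hw', rfl⟩ := hw
  rw [rho_D_apply]
  have h1 : w' = (coeff 0 (w' ∅)) • e k m ∅ 0 := Tup_zero_eq hw'
  rw [h1, map_smul, D_e_empty, smul_zero, map_zero]

lemma B_zero : koszulB k (K0 m) 0 = ⊥ := by
  rw [koszulB, eq_bot_iff]
  rintro y hy
  rw [Submodule.mem_map] at hy
  obtain ⟨w, hw, rfl⟩ := hy
  rw [Submodule.mem_bot]
  exact Tcomp_zero_D k m hw

lemma Z_zero_le {x : koszulModule k (K0 m)} (hx : x ∈ koszulZ k (K0 m) 0) :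
    ∃ c : k, x = c • g0 k m := by
  rw [koszulZ, Submodule.mem_inf] at hx
  have h1 := hx.1
  rw [Tcomp_eq] at h1
  obtain ⟨x', hx', rfl⟩ := h1
  refine ⟨coeff 0 (x' ∅), ?_⟩
  rw [g0, ← map_smul]
  exact congrArg _ (Tup_zero_eq hx')

lemma H_zero : koszulH k (K0 m) 0
    = Submodule.span k {(koszulB k (K0 m) 0).mkQ (g0 k m)} := by
  apply le_antisymm
  · rintro y hy
    rw [koszulH, Submodule.mem_map] at hy
    obtain ⟨x, hx, rfl⟩ := hy
    obtain ⟨c, rfl⟩ := Z_zero_le k m hx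
    rw [map_smul]
    exact Submodule.smul_mem _ _ (Submodule.mem_span_singleton_self _)
  · rw [Submodule.span_le, Set.singleton_subset_iff]
    exact ⟨g0 k m, Submodule.mem_inf.2 ⟨g0_in_Tcomp k m,
      LinearMap.mem_ker.2 (Tcomp_zero_D k m (g0_in_Tcomp k m))⟩, rfl⟩

lemma H_top : koszulH k (K0 m) (2*m+1)
    = Submodule.span k {(koszulB k (K0 m) (2*m+1)).mkQ (elem k m)} := by
  apply le_antisymm
  · rintro y hy
    rw [koszulH, Submodule.mem_map] at hy
    obtain ⟨x, hx, rfl⟩ := hy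
    rw [koszulZ, Submodule.mem_inf] at hx
    obtain ⟨c, hc, -⟩ := key k m (by omega) hx.1 (LinearMap.mem_ker.1 hx.2)
    rw [Submodule.mem_span_singleton]
    refine ⟨c, ?_⟩
    have h0 : (koszulB k (K0 m) (2*m+1)).mkQ (x - c • elem k m) = 0 := by
      rw [Submodule.mkQ_apply, Submodule.Quotient.mk_eq_zero]
      exact hc
    rw [map_sub, map_smul, sub_eq_zero] at h0
    exact h0.symm
  · rw [Submodule.span_le, Set.singleton_subset_iff]
    exact ⟨elem k m, by
      have h := elem_in_Z k m
      rw [koszulZ] at h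
      exact h, rfl⟩

lemma mkQ_elem_ne_zero : (koszulB k (K0 m) (2*m+1)).mkQ (elem k m) ≠ 0 := by
  rw [Submodule.mkQ_apply, Ne, Submodule.Quotient.mk_eq_zero]
  exact elem_not_bdry k m

lemma mkQ_g0_ne_zero : (koszulB k (K0 m) 0).mkQ (g0 k m) ≠ 0 := by
  rw [Submodule.mkQ_apply, Ne, Submodule.Quotient.mk_eq_zero, B_zero, Submodule.mem_bot]
  exact g0_ne_zero k m

lemma H_vanish {n : ℕ} (h0 : n ≠ 0) (h1 : n ≠ 2*m+1) : koszulH k (K0 m) n = ⊥ := by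
  rw [koszulH, eq_bot_iff]
  rintro y hy
  rw [Submodule.mem_map] at hy
  obtain ⟨x, hx, rfl⟩ := hy
  rw [koszulZ, Submodule.mem_inf] at hx
  obtain ⟨c, hc, hcz⟩ := key k m (by omega) hx.1 (LinearMap.mem_ker.1 hx.2)
  rw [hcz h1, zero_smul, sub_zero] at hc
  rw [Submodule.mem_bot, Submodule.mkQ_apply, Submodule.Quotient.mk_eq_zero]
  exact hc

end Down

end KAux


section THM

/-- for `K = ∂Δ^{m-1}` (here with `m+1` vertices: faces are the proper
subsets of `{1,…,m+1}`), so that `k(K) = k[v_1,…,v_{m+1}]/(v_1⋯v_{m+1})`, the element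
`v_1⋯v_m ⊗ u_{m+1}` of the Koszul dg-algebra is a cocycle of total degree `2(m+1)-1`
which is not a coboundary (hence represents a nonzero cohomology class), and the total
cohomology is 2-dimensional over `k`, spanned by the classes of `1` and
`v_1⋯v_m ⊗ u_{m+1}`. -/
theorem koszul_cohomology_boundary_simplex (k : Type) [Field k] (m : ℕ) :
    (Finsupp.single ({Fin.last m} : Finset (Fin (m + 1)))
        (Ideal.Quotient.mk (srIdeal k {σ : Finset (Fin (m + 1)) | σ ≠ Finset.univ})
          (∏ i ∈ Finset.univ.erase (Fin.last m), X i)) ∈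
      koszulZ k {σ : Finset (Fin (m + 1)) | σ ≠ Finset.univ} (2 * (m + 1) - 1)) ∧
    (Finsupp.single ({Fin.last m} : Finset (Fin (m + 1)))
        (Ideal.Quotient.mk (srIdeal k {σ : Finset (Fin (m + 1)) | σ ≠ Finset.univ})
          (∏ i ∈ Finset.univ.erase (Fin.last m), X i)) ∉
      koszulB k {σ : Finset (Fin (m + 1)) | σ ≠ Finset.univ} (2 * (m + 1) - 1)) ∧
    Module.finrank k (koszulH k {σ : Finset (Fin (m + 1)) | σ ≠ Finset.univ} 0) = 1 ∧
    Module.finrank k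
      (koszulH k {σ : Finset (Fin (m + 1)) | σ ≠ Finset.univ} (2 * (m + 1) - 1)) = 1 ∧
    ∀ n : ℕ, n ≠ 0 → n ≠ 2 * (m + 1) - 1 →
      koszulH k {σ : Finset (Fin (m + 1)) | σ ≠ Finset.univ} n = ⊥ := by
  have h21 : 2 * (m + 1) - 1 = 2 * m + 1 := by omega
  rw [h21]
  refine ⟨KAux.elem_in_Z k m, KAux.elem_not_bdry k m, ?_, ?_, ?_⟩
  · rw [KAux.H_zero]
    exact finrank_span_singleton (KAux.mkQ_g0_ne_zero k m)
  · rw [KAux.H_top]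
    exact finrank_span_singleton (KAux.mkQ_elem_ne_zero k m)
  · intro n hn0 hn1
    exact KAux.H_vanish k m hn0 hn1
end THM
end

section
/- Let K be the disjoint union of m vertices and k a field. The cohomology of the Koszul dg-algebra k(K) ⊗ Λ[u_1,…,u_m] (d(u_i)=v_i) has dimensions: dim H^0 = 1, H^1 = H^2 = 0, and dim H^{k+1} = m·C(m−1, k−1) − C(m, k) for 2 ≤ k ≤ m, where C denotes the binomial coefficient. -/
open MvPolynomial

set_option maxHeartbeats 1000000
set_option synthInstance.maxHeartbeats 400000

/-- The complex of `m` disjoint vertices: faces are `∅` and the singletons. -/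
def discreteComplex (m : ℕ) : Set (Finset (Fin m)) :=
  {σ | σ = ∅ ∨ ∃ i : Fin m, σ = {i}}

namespace Ktest
variable (k : Type) [Field k] (m : ℕ)

/-- truncation map killing monomials with support of size ≥ 2 -/
noncomputable def phi : MvPolynomial (Fin m) k →ₗ[k] MvPolynomial (Fin m) k :=
  (MvPolynomial.basisMonomials (Fin m) k).constr k
    fun d => if d.support.card ≤ 1 then monomial d 1 else 0

lemma phi_monomial (d : Fin m →₀ ℕ) (c : k) :
    phi k m (monomial d c) = if d.support.card ≤ 1 then monomial d c else 0 := by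
  have h1 : (monomial d c : MvPolynomial (Fin m) k) = c • monomial d 1 := by
    rw [smul_monomial, smul_eq_mul, mul_one]
  have h2 : (monomial d 1 : MvPolynomial (Fin m) k) =
      (MvPolynomial.basisMonomials (Fin m) k) d := by
    rw [coe_basisMonomials]
  rw [h1, map_smul, h2]
  simp only [phi, Module.Basis.constr_basis]
  split_ifs with h
  · rw [← h2, ← h1]
  · rw [smul_zero]


lemma not_mem_discrete {I : Finset (Fin m)} (h : 2 ≤ I.card) : I ∉ discreteComplex m := by
  intro hI
  rcases hI with h0 | ⟨i, hi⟩
  · simp [h0] at h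
  · simp [hi] at h

lemma prod_X_eq (I : Finset (Fin m)) :
    (∏ i ∈ I, (X i : MvPolynomial (Fin m) k)) =
      monomial (∑ i ∈ I, Finsupp.single i 1) 1 := by
  classical
  induction I using Finset.induction_on with
  | empty => simp [monomial_zero']
  | insert _ _ hnot ih =>
      rw [Finset.prod_insert hnot, ih, Finset.sum_insert hnot, X, monomial_mul, one_mul]

lemma phi_srIdeal (x : MvPolynomial (Fin m) k) (hx : x ∈ srIdeal k (discreteComplex m)) :
    phi k m x = 0 := by
  have key : ∀ y ∈ srIdeal k (discreteComplex m), ∀ r : MvPolynomial (Fin m) k,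
      phi k m (r * y) = 0 := by
    intro y hy
    unfold srIdeal at hy
    refine Submodule.span_induction ?_ ?_ ?_ ?_ hy
    · rintro p ⟨I, hI, rfl⟩ r
      have hI2 : 2 ≤ I.card := by
        by_contra hc
        interval_cases h : I.card
        · exact hI (Or.inl (Finset.card_eq_zero.mp h))
        · obtain ⟨i, hi⟩ := Finset.card_eq_one.mp h
          exact hI (Or.inr ⟨i, hi⟩)
      induction r using MvPolynomial.induction_on' with
      | monomial d c =>
          rw [prod_X_eq, monomial_mul, mul_one, phi_monomial, if_neg]
          intro hle
          have hsub : I ⊆ (d + ∑ i ∈ I, Finsupp.single i 1).support := by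
            intro i hi
            rw [Finsupp.mem_support_iff]
            have : (∑ j ∈ I, Finsupp.single j 1) i = 1 := by
              rw [Finset.sum_apply']
              rw [Finset.sum_eq_single_of_mem i hi]
              · simp
              · intro j _ hj; exact Finsupp.single_eq_of_ne hj.symm
            simp only [Finsupp.add_apply, this]
            omega
          have := Finset.card_le_card hsub
          omega
      | add p q hp hq =>
          rw [add_mul, map_add, hp, hq, add_zero]
    · intro r; rw [mul_zero, map_zero]
    · intro p q _ _ hp hq r
      rw [mul_add, map_add, hp r, hq r, add_zero]
    · intro a p _ hp r
      rw [smul_eq_mul, ← mul_assoc, hp (r * a)]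
  have := key x hx 1
  rwa [one_mul] at this

lemma mk_monomial_bad {d : Fin m →₀ ℕ} (h : 2 ≤ d.support.card) :
    Ideal.Quotient.mk (srIdeal k (discreteComplex m)) (monomial d (1 : k)) = 0 := by
  rw [Ideal.Quotient.eq_zero_iff_mem]
  obtain ⟨i, hi, j, hj, hij⟩ := Finset.one_lt_card.mp h
  have hdi : 1 ≤ d i := Nat.one_le_iff_ne_zero.mpr (Finsupp.mem_support_iff.mp hi)
  have hdj : 1 ≤ d j := Nat.one_le_iff_ne_zero.mpr (Finsupp.mem_support_iff.mp hj)
  have hd : d = (d - Finsupp.single i 1 - Finsupp.single j 1) +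
      (Finsupp.single i 1 + Finsupp.single j 1) := by
    ext l
    simp only [Finsupp.add_apply, Finsupp.tsub_apply, Finsupp.single_apply]
    by_cases h1 : i = l
    · subst h1
      have h2 : ¬ (j = i) := fun h => hij h.symm
      simp only [if_neg h2]
      simp
      omega
    · by_cases h2 : j = l
      · subst h2
        simp only [if_neg h1]
        simp
        omega
      · simp only [if_neg h1, if_neg h2]
        omega
  have hmon : (monomial d (1:k) : MvPolynomial (Fin m) k) =
      monomial (d - Finsupp.single i 1 - Finsupp.single j 1) 1 * ∏ l ∈ {i, j}, X l := by
    rw [prod_X_eq, Finset.sum_pair hij, monomial_mul, mul_one, ← hd]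
  rw [hmon]
  refine Ideal.mul_mem_left _ _ (Ideal.subset_span ?_)
  refine ⟨{i, j}, not_mem_discrete m ?_, rfl⟩
  rw [Finset.card_pair hij]


/-- lift of `phi` to the quotient ring, as a `k`-linear map -/
noncomputable def phibar : srRing k (discreteComplex m) →ₗ[k] MvPolynomial (Fin m) k :=
  (Submodule.liftQ ((srIdeal k (discreteComplex m)).restrictScalars k) (phi k m)
    (fun x hx => phi_srIdeal k m x hx)) ∘ₗ
  (Submodule.Quotient.restrictScalarsEquiv k (srIdeal k (discreteComplex m))).symm.toLinearMap

lemma phibar_mk (p : MvPolynomial (Fin m) k) :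
    phibar k m (Ideal.Quotient.mk (srIdeal k (discreteComplex m)) p) = phi k m p := rfl

/-- basic vectors of the Koszul module -/
noncomputable def bb (S : Finset (Fin m)) (dd : Fin m →₀ ℕ) :
    koszulModule k (discreteComplex m) :=
  Finsupp.single S (Ideal.Quotient.mk (srIdeal k (discreteComplex m)) (monomial dd 1))

/-- coordinate functionals -/
noncomputable def psi (T : Finset (Fin m)) (e : Fin m →₀ ℕ) :
    koszulModule k (discreteComplex m) →ₗ[k] k :=
  (lcoeff k e) ∘ₗ (phibar k m) ∘ₗ
    (Finsupp.lapply T : koszulModule k (discreteComplex m) →ₗ[k] srRing k (discreteComplex m))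

lemma psi_bb {dd : Fin m →₀ ℕ} (h : dd.support.card ≤ 1) (T : Finset (Fin m))
    (e : Fin m →₀ ℕ) (S : Finset (Fin m)) :
    psi k m T e (bb k m S dd) = if S = T then (if dd = e then 1 else 0) else 0 := by
  simp only [psi, bb, LinearMap.comp_apply, Finsupp.lapply_apply, Finsupp.single_apply]
  split_ifs with h1 h2
  · rw [phibar_mk, phi_monomial, if_pos h, lcoeff_apply, coeff_monomial, if_pos h2]
  · rw [phibar_mk, phi_monomial, if_pos h, lcoeff_apply, coeff_monomial, if_neg h2]
  · rw [map_zero, map_zero]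

lemma koszulD_single (K : Set (Finset (Fin m))) (S : Finset (Fin m))
    (x : srRing k K) :
    koszulD k K (Finsupp.single S x) = ∑ i ∈ S, ((-1 : k) ^ (S.filter (· < i)).card) •
      Finsupp.single (S.erase i) (Ideal.Quotient.mk (srIdeal k K) (X i) * x) := by
  rw [koszulD, Finsupp.lsum_single, LinearMap.sum_apply]
  refine Finset.sum_congr rfl fun i _ => ?_
  rw [LinearMap.smul_apply, LinearMap.comp_apply, LinearMap.mulLeft_apply,
    Finsupp.lsingle_apply]

lemma d_bbE (S : Finset (Fin m)) :
    koszulD k (discreteComplex m) (bb k m S 0) =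
      ∑ i ∈ S, ((-1 : k) ^ (S.filter (· < i)).card) •
        bb k m (S.erase i) (Finsupp.single i 1) := by
  rw [bb, koszulD_single]
  refine Finset.sum_congr rfl fun i _ => ?_
  rw [bb, ← map_mul, X, monomial_mul, mul_one, add_zero]

lemma d_bbA {S : Finset (Fin m)} {i : Fin m} {a : ℕ} (hi : i ∈ S) (ha : 1 ≤ a) :
    koszulD k (discreteComplex m) (bb k m S (Finsupp.single i a)) =
      ((-1 : k) ^ (S.filter (· < i)).card) •
        bb k m (S.erase i) (Finsupp.single i (a + 1)) := by
  rw [bb, koszulD_single]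
  rw [Finset.sum_eq_single_of_mem i hi]
  · rw [bb, ← map_mul, X, monomial_mul, mul_one, ← Finsupp.single_add, add_comm 1 a]
  · intro l _ hl
    rw [← map_mul, X, monomial_mul, mul_one]
    have hsupp : (Finsupp.single l 1 + Finsupp.single i a).support = {l, i} := by
      rw [Finsupp.support_add_eq, Finsupp.support_single_ne_zero _ one_ne_zero,
        Finsupp.support_single_ne_zero _ (by omega : a ≠ 0)]
      · rfl
      · rw [Finsupp.support_single_ne_zero _ one_ne_zero,
          Finsupp.support_single_ne_zero _ (by omega : a ≠ 0)]
        exact Finset.disjoint_singleton.mpr hl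
    rw [mk_monomial_bad k m (by rw [hsupp, Finset.card_pair hl]), Finsupp.single_zero,
      smul_zero]

lemma d_bbW {S : Finset (Fin m)} {i : Fin m} {a : ℕ} (hi : i ∉ S) (ha : 1 ≤ a) :
    koszulD k (discreteComplex m) (bb k m S (Finsupp.single i a)) = 0 := by
  rw [bb, koszulD_single]
  refine Finset.sum_eq_zero fun l hl => ?_
  have hli : l ≠ i := fun h => hi (h ▸ hl)
  rw [← map_mul, X, monomial_mul, mul_one]
  have hsupp : (Finsupp.single l 1 + Finsupp.single i a).support = {l, i} := by
    rw [Finsupp.support_add_eq, Finsupp.support_single_ne_zero _ one_ne_zero,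
      Finsupp.support_single_ne_zero _ (by omega : a ≠ 0)]
    · rfl
    · rw [Finsupp.support_single_ne_zero _ one_ne_zero,
        Finsupp.support_single_ne_zero _ (by omega : a ≠ 0)]
      exact Finset.disjoint_singleton.mpr hli
  rw [mk_monomial_bad k m (by rw [hsupp, Finset.card_pair hli]), Finsupp.single_zero,
    smul_zero]

lemma good_cases {dd : Fin m →₀ ℕ} (h : dd.support.card ≤ 1) :
    dd = 0 ∨ ∃ i a, 1 ≤ a ∧ dd = Finsupp.single i a := by
  interval_cases hc : dd.support.card
  · exact Or.inl (Finsupp.support_eq_empty.mp (Finset.card_eq_zero.mp hc))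
  · obtain ⟨i, hi⟩ := Finset.card_eq_one.mp hc
    obtain ⟨hne, heq⟩ := Finsupp.support_eq_singleton.mp hi
    exact Or.inr ⟨i, dd i, Nat.one_le_iff_ne_zero.mpr hne, heq⟩

lemma single_degree (i : Fin m) (a : ℕ) :
    ((Finsupp.single i a : Fin m →₀ ℕ).sum fun _ e => e) = a :=
  Finsupp.sum_single_index rfl

lemma degree_zero {dd : Fin m →₀ ℕ} (h : (dd.sum fun _ e => e) = 0) : dd = 0 := by
  ext i
  simp only [Finsupp.coe_zero, Pi.zero_apply]
  by_cases hi : i ∈ dd.support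
  · have h2 : dd i ≤ ∑ x ∈ dd.support, dd x :=
      Finset.single_le_sum (fun j _ => Nat.zero_le _) hi
    have h3 : ∑ x ∈ dd.support, dd x = 0 := by simpa [Finsupp.sum] using h
    omega
  · exact Finsupp.notMem_support_iff.mp hi


lemma good_single (i : Fin m) (a : ℕ) : (Finsupp.single i a).support.card ≤ 1 := by
  refine le_trans (Finset.card_le_card Finsupp.support_single_subset) ?_
  simp

lemma single_ne_single_exp {i l : Fin m} {x y : ℕ} (hy : y ≠ 0) (hxy : x ≠ y) :
    Finsupp.single l x ≠ Finsupp.single i y := by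
  rw [Ne, Finsupp.single_eq_single_iff]
  rintro (⟨-, h⟩ | ⟨-, h⟩)
  · exact hxy h
  · exact hy h

lemma single_ne_single_name {i l : Fin m} {x : ℕ} (hx : x ≠ 0) (h : l ≠ i) :
    Finsupp.single l x ≠ Finsupp.single i x := by
  rw [Ne, Finsupp.single_eq_single_iff]
  rintro (⟨h1, -⟩ | ⟨h1, -⟩)
  · exact h h1
  · exact hx h1

lemma erase_eq_imp {S T : Finset (Fin m)} {i : Fin m} (hiS : i ∈ S) (hiT : i ∈ T)
    (h : S.erase i = T.erase i) : S = T := by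
  rw [← Finset.insert_erase hiS, h, Finset.insert_erase hiT]

lemma psi_d_bbE (T : Finset (Fin m)) (e : Fin m →₀ ℕ) (S : Finset (Fin m)) :
    psi k m T e (koszulD k (discreteComplex m) (bb k m S 0)) =
      ∑ l ∈ S, ((-1 : k) ^ (S.filter (· < l)).card) *
        (if S.erase l = T then (if Finsupp.single l 1 = e then 1 else 0) else 0) := by
  rw [d_bbE, map_sum]
  refine Finset.sum_congr rfl fun l _ => ?_
  rw [map_smul, smul_eq_mul, psi_bb k m (good_single m l 1)]

lemma psi_d_bbA {S : Finset (Fin m)} {i : Fin m} {a : ℕ} (hi : i ∈ S) (ha : 1 ≤ a)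
    (T : Finset (Fin m)) (e : Fin m →₀ ℕ) :
    psi k m T e (koszulD k (discreteComplex m) (bb k m S (Finsupp.single i a))) =
      ((-1 : k) ^ (S.filter (· < i)).card) *
        (if S.erase i = T then (if Finsupp.single i (a + 1) = e then 1 else 0) else 0) := by
  rw [d_bbA k m hi ha, map_smul, smul_eq_mul, psi_bb k m (good_single m i (a + 1))]

/-- index type for the generators of the degree-`n` component -/
def Idx (n : ℕ) :=
  {p : Finset (Fin m) × (Fin m →₀ ℕ) //
    p.2.support.card ≤ 1 ∧ 2 * (p.2.sum fun _ e => e) + p.1.card = n}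

noncomputable def vfam (n : ℕ) (p : Idx m n) : koszulModule k (discreteComplex m) :=
  bb k m p.1.1 p.1.2

lemma tcomp_eq (n : ℕ) :
    koszulTcomp k (discreteComplex m) n = Submodule.span k (Set.range (vfam k m n)) := by
  rw [koszulTcomp]
  apply le_antisymm <;> rw [Submodule.span_le]
  · rintro f ⟨S, dd, hdeg, rfl⟩
    by_cases hgood : dd.support.card ≤ 1
    · exact Submodule.subset_span ⟨⟨(S, dd), hgood, hdeg⟩, rfl⟩
    · have : Ideal.Quotient.mk (srIdeal k (discreteComplex m)) (monomial dd (1:k)) = 0 :=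
        mk_monomial_bad k m (by omega)
      rw [this, Finsupp.single_zero]
      exact Submodule.zero_mem _
  · rintro f ⟨p, rfl⟩
    exact Submodule.subset_span ⟨p.1.1, p.1.2, p.2.2, rfl⟩

/-- the key vanishing lemma: in any relation `∑ g q • d(v q) = 0`, the coefficients of
the vectors of "type A" (`d = single i a`, `i ∈ S`) and "type E" (`d = 0`) vanish. -/
lemma master (n : ℕ) (hn : 1 ≤ n) (s : Finset (Idx m n)) (g : Idx m n → k)
    (hsum : ∑ q ∈ s, g q • koszulD k (discreteComplex m) (vfam k m n q) = 0)
    (p : Idx m n) (hp : p ∈ s)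
    (hAE : p.1.2 = 0 ∨ ∃ i ∈ p.1.1, ∃ a, 1 ≤ a ∧ p.1.2 = Finsupp.single i a) :
    g p = 0 := by
  classical
  rcases hAE with hp2 | ⟨i, hiS, a, ha, hp2⟩
  · -- type E
    have hcard : p.1.1.card = n := by
      have := p.2.2
      rw [hp2] at this
      simpa using this
    obtain ⟨i0, hi0⟩ := Finset.card_pos.mp (by omega : 0 < p.1.1.card)
    set ψ := psi k m (p.1.1.erase i0) (Finsupp.single i0 1) with hψ
    have h0 : ∑ q ∈ s, g q * ψ (koszulD k (discreteComplex m) (vfam k m n q)) = 0 := by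
      have := congrArg ψ hsum
      simpa only [map_sum, map_smul, smul_eq_mul, map_zero] using this
    rw [Finset.sum_eq_single_of_mem p hp ?_] at h0
    · rw [hψ, vfam, hp2, psi_d_bbE, Finset.sum_eq_single_of_mem i0 hi0 ?_] at h0
      · rw [if_pos rfl, if_pos rfl, mul_one] at h0
        rcases mul_eq_zero.mp h0 with h | h
        · exact h
        · exact absurd h (pow_ne_zero _ (by norm_num))
      · intro l _ hl
        rw [if_neg (single_ne_single_name m one_ne_zero hl), ite_self, mul_zero]
    · intro q hq hqp
      rcases good_cases m q.2.1 with hq2 | ⟨i', a', ha', hq2⟩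
      · rw [hψ, vfam, hq2, psi_d_bbE]
        rw [Finset.sum_eq_zero, mul_zero]
        intro l hl
        by_cases hli : l = i0
        · subst hli
          by_cases hT : q.1.1.erase l = p.1.1.erase l
          · exfalso
            have hlp : l ∈ p.1.1 := hi0
            have : q.1.1 = p.1.1 := erase_eq_imp m hl hlp hT
            apply hqp
            apply Subtype.ext
            apply Prod.ext this (hq2.trans hp2.symm)
          · rw [if_neg hT, mul_zero]
        · rw [if_neg (single_ne_single_name m one_ne_zero hli), ite_self, mul_zero]
      · by_cases hi' : i' ∈ q.1.1
        · rw [hψ, vfam, hq2, psi_d_bbA k m hi' ha',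
            if_neg (single_ne_single_exp m one_ne_zero (by omega) :
              Finsupp.single i' (a' + 1) ≠ Finsupp.single i0 1), ite_self, mul_zero, mul_zero]
        · rw [vfam, hq2, d_bbW k m hi' ha', map_zero, mul_zero]
  · -- type A
    set ψ := psi k m (p.1.1.erase i) (Finsupp.single i (a + 1)) with hψ
    have h0 : ∑ q ∈ s, g q * ψ (koszulD k (discreteComplex m) (vfam k m n q)) = 0 := by
      have := congrArg ψ hsum
      simpa only [map_sum, map_smul, smul_eq_mul, map_zero] using this
    rw [Finset.sum_eq_single_of_mem p hp ?_] at h0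
    · rw [hψ, vfam, hp2, psi_d_bbA k m hiS ha, if_pos rfl, if_pos rfl, mul_one] at h0
      rcases mul_eq_zero.mp h0 with h | h
      · exact h
      · exact absurd h (pow_ne_zero _ (by norm_num))
    · intro q hq hqp
      rcases good_cases m q.2.1 with hq2 | ⟨i', a', ha', hq2⟩
      · rw [hψ, vfam, hq2, psi_d_bbE]
        rw [Finset.sum_eq_zero, mul_zero]
        intro l hl
        rw [if_neg (single_ne_single_exp m (by omega) (by omega) :
          Finsupp.single l 1 ≠ Finsupp.single i (a + 1)), ite_self, mul_zero]
      · by_cases hi' : i' ∈ q.1.1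
        · rw [hψ, vfam, hq2, psi_d_bbA k m hi' ha']
          by_cases he : Finsupp.single i' (a' + 1) = Finsupp.single i (a + 1)
          · have hii : i' = i ∧ a' = a := by
              rcases Finsupp.single_eq_single_iff _ _ _ _ |>.mp he with ⟨h1, h2⟩ | ⟨h1, _⟩
              · exact ⟨h1, by omega⟩
              · omega
            obtain ⟨rfl, rfl⟩ := hii
            by_cases hT : q.1.1.erase i' = p.1.1.erase i'
            · exfalso
              exact hqp (Subtype.ext (Prod.ext (erase_eq_imp m hi' hiS hT)
                (hq2.trans hp2.symm)))
            · rw [if_neg hT, mul_zero, mul_zero]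
          · rw [if_neg he, ite_self, mul_zero, mul_zero]
        · rw [vfam, hq2, d_bbW k m hi' ha', map_zero, mul_zero]


/-- index for cocycle basis vectors -/
def ZIdx (n : ℕ) :=
  {q : (Fin m × Finset (Fin m)) × Fin (n + 1) //
    q.1.1 ∉ q.1.2 ∧ 1 ≤ (q.2 : ℕ) ∧ 2 * (q.2 : ℕ) + q.1.2.card = n}

instance (n : ℕ) : Fintype (ZIdx m n) := by
  unfold ZIdx; infer_instance

noncomputable def zfam (n : ℕ) (q : ZIdx m n) : koszulModule k (discreteComplex m) :=
  bb k m q.1.1.2 (Finsupp.single q.1.1.1 (q.1.2 : ℕ))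

lemma zker (n : ℕ) (hn : 1 ≤ n) :
    koszulZ k (discreteComplex m) n = Submodule.span k (Set.range (zfam k m n)) := by
  apply le_antisymm
  · intro x hx
    obtain ⟨hxT, hxK⟩ := hx
    simp only [SetLike.mem_coe] at hxT hxK
    rw [tcomp_eq, Finsupp.mem_span_range_iff_exists_finsupp] at hxT
    obtain ⟨c, hc⟩ := hxT
    have hker : ∑ q ∈ c.support, c q • koszulD k (discreteComplex m) (vfam k m n q) = 0 := by
      have hx0 : koszulD k (discreteComplex m) x = 0 := hxK
      rw [← hc, Finsupp.sum, map_sum] at hx0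
      simpa only [map_smul] using hx0
    have hcoef := master k m n hn c.support c hker
    rw [← hc, Finsupp.sum]
    refine Submodule.sum_mem _ fun p hp => ?_
    rcases good_cases m p.2.1 with h0 | ⟨i, a, ha, hsing⟩
    · rw [hcoef p hp (Or.inl h0), zero_smul]
      exact Submodule.zero_mem _
    · by_cases hi : i ∈ p.1.1
      · rw [hcoef p hp (Or.inr ⟨i, hi, a, ha, hsing⟩), zero_smul]
        exact Submodule.zero_mem _
      · refine Submodule.smul_mem _ _ (Submodule.subset_span ?_)
        have hdeg := p.2.2
        rw [hsing, single_degree] at hdeg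
        refine ⟨⟨((i, p.1.1), ⟨a, by omega⟩), hi, ha, by simpa using hdeg⟩, ?_⟩
        unfold zfam
        rw [vfam, hsing]
  · rw [Submodule.span_le]
    rintro f ⟨q, rfl⟩
    rw [SetLike.mem_coe, koszulZ, Submodule.mem_inf]
    constructor
    · rw [tcomp_eq]
      refine Submodule.subset_span ⟨⟨(q.1.1.2, Finsupp.single q.1.1.1 (q.1.2 : ℕ)),
        good_single m _ _, by rw [single_degree]; exact q.2.2.2⟩, rfl⟩
    · rw [LinearMap.mem_ker, zfam, d_bbW k m q.2.1 q.2.2.1]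

/-- index for the "type A" generators -/
def QA (t : ℕ) :=
  {q : (Fin m × Finset (Fin m)) × Fin (t + 1) //
    q.1.1 ∈ q.1.2 ∧ 1 ≤ (q.2 : ℕ) ∧ 2 * (q.2 : ℕ) + q.1.2.card = t}

/-- index for the "type E" generators -/
def QE (t : ℕ) := {S : Finset (Fin m) // S.card = t}

instance (t : ℕ) : Fintype (QA m t) := by unfold QA; infer_instance
instance (t : ℕ) : Fintype (QE m t) := by unfold QE; infer_instance

noncomputable def aefam (t : ℕ) : QA m t ⊕ QE m t → koszulModule k (discreteComplex m)
  | .inl q => bb k m q.1.1.2 (Finsupp.single q.1.1.1 (q.1.2 : ℕ))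
  | .inr S => bb k m S.1 0

lemma bimg (t : ℕ) :
    koszulB k (discreteComplex m) (t + 1) =
      Submodule.span k (Set.range
        (fun q => koszulD k (discreteComplex m) (aefam k m t q))) := by
  rw [koszulB, Nat.add_sub_cancel, tcomp_eq, Submodule.map_span, ← Set.range_comp]
  apply le_antisymm <;> rw [Submodule.span_le]
  · rintro f ⟨p, rfl⟩
    rcases good_cases m p.2.1 with h0 | ⟨i, a, ha, hsing⟩
    · have hcard : p.1.1.card = t := by
        have := p.2.2
        rw [h0] at this
        simpa using this
      refine Submodule.subset_span ⟨Sum.inr ⟨p.1.1, hcard⟩, ?_⟩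
      simp only [Function.comp_apply, aefam, vfam, h0]
    · by_cases hi : i ∈ p.1.1
      · have hdeg := p.2.2
        rw [hsing, single_degree] at hdeg
        refine Submodule.subset_span ⟨Sum.inl ⟨((i, p.1.1), ⟨a, by omega⟩), hi, ha,
          by simpa using hdeg⟩, ?_⟩
        simp only [Function.comp_apply, aefam, vfam, hsing]
      · have : koszulD k (discreteComplex m) (vfam k m t p) = 0 := by
          rw [vfam, hsing]
          exact d_bbW k m hi ha
        rw [Function.comp_apply, this]
        exact Submodule.zero_mem _
  · rintro f ⟨q, rfl⟩
    rcases q with q | S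
    · refine Submodule.subset_span ⟨⟨(q.1.1.2, Finsupp.single q.1.1.1 (q.1.2 : ℕ)),
        good_single m _ _, by rw [single_degree]; exact q.2.2.2⟩, ?_⟩
      rfl
    · refine Submodule.subset_span ⟨⟨(S.1, 0), by simp, by
        rw [Finsupp.sum_zero_index]
        simpa using S.2⟩, ?_⟩
      rfl


lemma zfam_indep (n : ℕ) : LinearIndependent k (zfam k m n) := by
  rw [linearIndependent_iff']
  intro s g hsum q hq
  set ψ := psi k m q.1.1.2 (Finsupp.single q.1.1.1 (q.1.2 : ℕ)) with hψ
  have h0 : ∑ q' ∈ s, g q' * ψ (zfam k m n q') = 0 := by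
    have := congrArg ψ hsum
    simpa only [map_sum, map_smul, smul_eq_mul, map_zero] using this
  rw [Finset.sum_eq_single_of_mem q hq ?_] at h0
  · rwa [hψ, zfam, psi_bb k m (good_single m _ _), if_pos rfl, if_pos rfl, mul_one] at h0
  · intro q' hq' hne
    rw [hψ, zfam, psi_bb k m (good_single m _ _)]
    by_cases hT : q'.1.1.2 = q.1.1.2
    · by_cases he : Finsupp.single q'.1.1.1 ((q'.1.2 : ℕ)) =
          Finsupp.single q.1.1.1 ((q.1.2 : ℕ))
      · exfalso
        apply hne
        rcases (Finsupp.single_eq_single_iff _ _ _ _).mp he with ⟨hi, ha⟩ | ⟨ha, -⟩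
        · exact Subtype.ext (Prod.ext (Prod.ext hi hT) (Fin.val_injective ha))
        · exact absurd ha (by have := q'.2.2.1; omega)
      · rw [if_pos hT, if_neg he, mul_zero]
    · rw [if_neg hT, mul_zero]

lemma daefam_indep (t : ℕ) (ht : 1 ≤ t) :
    LinearIndependent k (fun q => koszulD k (discreteComplex m) (aefam k m t q)) := by
  rw [linearIndependent_iff']
  intro s g hsum q hq
  rcases q with qa | qe
  · -- type A index
    obtain ⟨⟨⟨i, T⟩, a⟩, hi, ha, hdeg⟩ := qa
    set ψ := psi k m (T.erase i) (Finsupp.single i ((a : ℕ) + 1)) with hψ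
    have h0 : ∑ q' ∈ s, g q' * ψ (koszulD k (discreteComplex m) (aefam k m t q')) = 0 := by
      have := congrArg ψ hsum
      simpa only [map_sum, map_smul, smul_eq_mul, map_zero] using this
    rw [Finset.sum_eq_single_of_mem _ hq ?_] at h0
    · rw [hψ] at h0
      dsimp only [aefam] at h0
      rw [psi_d_bbA k m hi ha, if_pos rfl, if_pos rfl, mul_one] at h0
      rcases mul_eq_zero.mp h0 with h | h
      · exact h
      · exact absurd h (pow_ne_zero _ (by norm_num))
    · intro q' hq' hne
      rcases q' with qa' | qe'
      · obtain ⟨⟨⟨i', T'⟩, a'⟩, hi', ha', hdeg'⟩ := qa'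
        rw [hψ]
        dsimp only [aefam]
        rw [psi_d_bbA k m hi' ha']
        by_cases he : Finsupp.single i' ((a' : ℕ) + 1) = Finsupp.single i ((a : ℕ) + 1)
        · have hii : i' = i ∧ (a' : ℕ) = (a : ℕ) := by
            rcases (Finsupp.single_eq_single_iff _ _ _ _).mp he with ⟨h1, h2⟩ | ⟨h1, _⟩
            · exact ⟨h1, by omega⟩
            · omega
          obtain ⟨rfl, hval⟩ := hii
          have haa : a' = a := Fin.val_injective hval
          subst haa
          by_cases hT : T'.erase i' = T.erase i'
          · exfalso
            have hTT : T' = T := erase_eq_imp m hi' hi hT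
            subst hTT
            exact hne (congrArg Sum.inl (Subtype.ext rfl))
          · rw [if_neg hT, mul_zero, mul_zero]
        · rw [if_neg he, ite_self, mul_zero, mul_zero]
      · have ha2 : 1 ≤ (a : ℕ) := ha
        rw [hψ]
        dsimp only [aefam]
        rw [psi_d_bbE, Finset.sum_eq_zero, mul_zero]
        intro l hl
        rw [if_neg (single_ne_single_exp m (by omega) (by omega) :
            Finsupp.single l 1 ≠ Finsupp.single i ((a : ℕ) + 1)),
          ite_self, mul_zero]
  · -- type E index
    obtain ⟨S, hS⟩ := qe
    obtain ⟨i0, hi0⟩ := Finset.card_pos.mp (by omega : 0 < S.card)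
    set ψ := psi k m (S.erase i0) (Finsupp.single i0 1) with hψ
    have h0 : ∑ q' ∈ s, g q' * ψ (koszulD k (discreteComplex m) (aefam k m t q')) = 0 := by
      have := congrArg ψ hsum
      simpa only [map_sum, map_smul, smul_eq_mul, map_zero] using this
    rw [Finset.sum_eq_single_of_mem _ hq ?_] at h0
    · rw [hψ] at h0
      dsimp only [aefam] at h0
      rw [psi_d_bbE, Finset.sum_eq_single_of_mem i0 hi0 ?_] at h0
      · rw [if_pos rfl, if_pos rfl, mul_one] at h0
        rcases mul_eq_zero.mp h0 with h | h
        · exact h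
        · exact absurd h (pow_ne_zero _ (by norm_num))
      · intro l _ hl
        rw [if_neg (single_ne_single_name m one_ne_zero hl), ite_self, mul_zero]
    · intro q' hq' hne
      rcases q' with qa' | qe'
      · obtain ⟨⟨⟨i', T'⟩, a'⟩, hi', ha', hdeg'⟩ := qa'
        have ha2 : 1 ≤ (a' : ℕ) := ha'
        rw [hψ]
        dsimp only [aefam]
        rw [psi_d_bbA k m hi' ha',
          if_neg (single_ne_single_exp m one_ne_zero (by omega) :
            Finsupp.single i' ((a' : ℕ) + 1) ≠ Finsupp.single i0 1),
          ite_self, mul_zero, mul_zero]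
      · obtain ⟨S', hS'⟩ := qe'
        rw [hψ]
        dsimp only [aefam]
        rw [psi_d_bbE, Finset.sum_eq_zero, mul_zero]
        intro l hl
        by_cases hli : l = i0
        · subst hli
          by_cases hT : S'.erase l = S.erase l
          · exfalso
            have hSS : S' = S := erase_eq_imp m hl hi0 hT
            subst hSS
            exact hne (congrArg Sum.inr (Subtype.ext rfl))
          · rw [if_neg hT, mul_zero]
        · rw [if_neg (single_ne_single_name m one_ne_zero hli), ite_self, mul_zero]


lemma finrank_H_add {M : Type*} [AddCommGroup M] [Module k M] (B Z : Submodule k M)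
    (hBZ : B ≤ Z) [FiniteDimensional k Z] :
    Module.finrank k (Submodule.map B.mkQ Z) + Module.finrank k B = Module.finrank k Z := by
  have hf := LinearMap.finrank_range_add_finrank_ker (B.mkQ.comp Z.subtype)
  rw [LinearMap.range_comp, Submodule.range_subtype, LinearMap.ker_comp,
    Submodule.ker_mkQ] at hf
  rw [← hf]
  congr 1
  exact (Submodule.comapSubtypeEquivOfLe hBZ).finrank_eq.symm

lemma card_pairs (c : ℕ) :
    Fintype.card {p : Fin m × Finset (Fin m) // p.1 ∉ p.2 ∧ p.2.card = c} =
      m * (m - 1).choose c := by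
  classical
  have e : {p : Fin m × Finset (Fin m) // p.1 ∉ p.2 ∧ p.2.card = c} ≃
      Σ i : Fin m, {T : Finset (Fin m) // i ∉ T ∧ T.card = c} :=
    { toFun := fun p => ⟨p.1.1, p.1.2, p.2⟩
      invFun := fun x => ⟨(x.1, x.2.1), x.2.2⟩
      left_inv := fun p => rfl
      right_inv := fun x => rfl }
  rw [Fintype.card_congr e, Fintype.card_sigma]
  have hcard : ∀ i : Fin m,
      Fintype.card {T : Finset (Fin m) // i ∉ T ∧ T.card = c} = (m - 1).choose c := by
    intro i
    rw [Fintype.card_subtype]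
    have hfil : Finset.univ.filter (fun T : Finset (Fin m) => i ∉ T ∧ T.card = c) =
        Finset.powersetCard c (Finset.univ.erase i) := by
      ext T
      rw [Finset.mem_filter, Finset.mem_powersetCard, Finset.subset_erase]
      constructor
      · rintro ⟨-, h1, h2⟩
        exact ⟨⟨Finset.subset_univ T, h1⟩, h2⟩
      · rintro ⟨⟨-, h1⟩, h2⟩
        exact ⟨Finset.mem_univ T, h1, h2⟩
    rw [hfil, Finset.card_powersetCard, Finset.card_erase_of_mem (Finset.mem_univ i),
      Finset.card_univ, Fintype.card_fin]
  rw [Finset.sum_congr rfl (fun i _ => hcard i), Finset.sum_const, Finset.card_univ,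
    Fintype.card_fin, smul_eq_mul]

lemma card_QE (t : ℕ) : Fintype.card (QE m t) = m.choose t := by
  have e : QE m t ≃ {S : Finset (Fin m) // S.card = t} := Equiv.refl _
  rw [Fintype.card_congr e, Fintype.card_finset_len, Fintype.card_fin]

/-- splitting of the cocycle index set by `a = 1` versus `a ≥ 2`. -/
noncomputable def splitZ (j : ℕ) (hj : 1 ≤ j) :
    ZIdx m (j + 1) ≃
      ({p : Fin m × Finset (Fin m) // p.1 ∉ p.2 ∧ p.2.card = j - 1} ⊕ QA m j) where
  toFun q :=
    if h : (q.1.2 : ℕ) = 1 then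
      Sum.inl ⟨q.1.1, q.2.1, by have := q.2.2.2; omega⟩
    else
      Sum.inr ⟨((q.1.1.1, insert q.1.1.1 q.1.1.2), ⟨(q.1.2 : ℕ) - 1, by
          have h1 := q.2.2.1
          have h2 := q.2.2.2
          omega⟩),
        Finset.mem_insert_self _ _, by
          show 1 ≤ (q.1.2 : ℕ) - 1
          have h1 := q.2.2.1
          omega, by
          show 2 * ((q.1.2 : ℕ) - 1) + (insert q.1.1.1 q.1.1.2).card = j
          rw [Finset.card_insert_of_notMem q.2.1]
          have h1 := q.2.2.1
          have h2 := q.2.2.2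
          omega⟩
  invFun x := match x with
    | Sum.inl p => ⟨((p.1.1, p.1.2), ⟨1, by omega⟩), p.2.1, le_refl 1, by
        show 2 * 1 + p.1.2.card = j + 1
        have := p.2.2
        omega⟩
    | Sum.inr q => ⟨((q.1.1.1, q.1.1.2.erase q.1.1.1), ⟨(q.1.2 : ℕ) + 1, by
          have h2 := q.2.2.2
          omega⟩),
        Finset.notMem_erase _ _, Nat.succ_le_succ (Nat.zero_le _), by
          show 2 * ((q.1.2 : ℕ) + 1) + (q.1.1.2.erase q.1.1.1).card = j + 1
          rw [Finset.card_erase_of_mem q.2.1]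
          have h2 := q.2.2.2
          have hc := Finset.card_pos.mpr ⟨q.1.1.1, q.2.1⟩
          omega⟩
  left_inv := by
    rintro ⟨⟨⟨i, T⟩, a⟩, h1, h2, h3⟩
    dsimp only
    split_ifs with h
    · exact Subtype.ext (Prod.ext rfl (Fin.val_injective h.symm))
    · have h2' : 1 ≤ (a : ℕ) := h2
      refine Subtype.ext (Prod.ext (Prod.ext rfl ?_) (Fin.val_injective ?_))
      · exact Finset.erase_insert h1
      · show (a : ℕ) - 1 + 1 = (a : ℕ)
        omega
  right_inv := by
    rintro (⟨⟨i, T⟩, hp1, hp2⟩ | ⟨⟨⟨i, T⟩, a⟩, h1, h2, h3⟩)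
    · dsimp only
      rw [dif_pos rfl]
    · have h2' : 1 ≤ (a : ℕ) := h2
      dsimp only
      rw [dif_neg (by show ¬((a : ℕ) + 1 = 1); omega)]
      refine congrArg Sum.inr (Subtype.ext (Prod.ext (Prod.ext rfl ?_)
        (Fin.val_injective ?_)))
      · exact Finset.insert_erase h1
      · show (a : ℕ) + 1 - 1 = (a : ℕ)
        omega


lemma d_bb_empty (K : Set (Finset (Fin m))) (x : srRing k K) :
    koszulD k K (Finsupp.single ∅ x) = 0 := by
  rw [koszulD_single]
  exact Finset.sum_empty

lemma bb0_ne : bb k m ∅ 0 ≠ 0 := by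
  intro h
  have h1 : Ideal.Quotient.mk (srIdeal k (discreteComplex m)) (monomial 0 (1:k)) = 0 :=
    Finsupp.single_eq_zero.mp h
  have h2 := phi_srIdeal k m _ (Ideal.Quotient.eq_zero_iff_mem.mp h1)
  rw [phi_monomial, if_pos (by simp)] at h2
  exact one_ne_zero (monomial_eq_zero.mp h2)

lemma z0 : koszulZ k (discreteComplex m) 0 = Submodule.span k {bb k m ∅ 0} := by
  apply le_antisymm
  · refine le_trans inf_le_left ?_
    rw [tcomp_eq, Submodule.span_le]
    rintro f ⟨p, rfl⟩
    have hdeg := p.2.2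
    have hS : p.1.1 = ∅ := Finset.card_eq_zero.mp (by omega)
    have hd : p.1.2 = 0 := degree_zero m (by omega)
    rw [vfam, hS, hd]
    exact Submodule.subset_span rfl
  · rw [Submodule.span_le, Set.singleton_subset_iff, SetLike.mem_coe, koszulZ,
      Submodule.mem_inf]
    constructor
    · rw [tcomp_eq]
      exact Submodule.subset_span ⟨⟨(∅, 0), by simp, by
        rw [Finsupp.sum_zero_index]; simp⟩, rfl⟩
    · rw [LinearMap.mem_ker, bb, d_bb_empty]

lemma b0 : koszulB k (discreteComplex m) 0 = ⊥ := by
  rw [koszulB, eq_bot_iff]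
  rintro y ⟨x, hx, rfl⟩
  rw [Submodule.mem_bot]
  have hle : koszulTcomp k (discreteComplex m) (0 - 1) ≤
      LinearMap.ker (koszulD k (discreteComplex m)) := by
    rw [show (0:ℕ) - 1 = 0 from rfl, tcomp_eq, Submodule.span_le]
    rintro f ⟨p, rfl⟩
    have hdeg := p.2.2
    have hS : p.1.1 = ∅ := Finset.card_eq_zero.mp (by omega)
    rw [SetLike.mem_coe, LinearMap.mem_ker, vfam, hS, bb, d_bb_empty]
  exact hle hx

lemma h0_case : Module.finrank k (koszulH k (discreteComplex m) 0) = 1 := by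
  haveI : FiniteDimensional k (koszulZ k (discreteComplex m) 0) := by
    rw [z0]
    exact FiniteDimensional.span_of_finite k (Set.finite_singleton _)
  have hadd := finrank_H_add k (koszulB k (discreteComplex m) 0)
    (koszulZ k (discreteComplex m) 0) (by rw [b0]; exact bot_le)
  have hB : Module.finrank k (koszulB k (discreteComplex m) 0) = 0 := by
    rw [b0]; exact finrank_bot k _
  have hZ : Module.finrank k (koszulZ k (discreteComplex m) 0) = 1 := by
    rw [z0]
    exact finrank_span_singleton (bb0_ne k m)
  rw [koszulH]
  omega

lemma h1_case : koszulH k (discreteComplex m) 1 = ⊥ := by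
  have he : IsEmpty (ZIdx m 1) := by
    constructor
    rintro ⟨⟨⟨i, T⟩, a⟩, h1, h2, h3⟩
    omega
  rw [koszulH, zker k m 1 le_rfl, Set.range_eq_empty (zfam k m 1), Submodule.span_empty,
    Submodule.map_bot]

lemma d_bb_singleton (i : Fin m) :
    koszulD k (discreteComplex m) (bb k m {i} 0) = bb k m ∅ (Finsupp.single i 1) := by
  rw [d_bbE, Finset.sum_singleton, Finset.erase_singleton]
  have hfil : ({i} : Finset (Fin m)).filter (· < i) = ∅ := by
    rw [Finset.filter_singleton, if_neg (lt_irrefl i)]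
  rw [hfil, Finset.card_empty, pow_zero, one_smul]

lemma h2_case : koszulH k (discreteComplex m) 2 = ⊥ := by
  have hZB : koszulZ k (discreteComplex m) 2 ≤ koszulB k (discreteComplex m) 2 := by
    rw [zker k m 2 (by omega), Submodule.span_le]
    rintro f ⟨q, rfl⟩
    obtain ⟨⟨⟨i, T⟩, a⟩, h1, h2, h3⟩ := q
    have h2' : 1 ≤ (a : ℕ) := h2
    have h3' : 2 * (a : ℕ) + T.card = 2 := h3
    have hT : T = ∅ := Finset.card_eq_zero.mp (by omega)
    have ha : (a : ℕ) = 1 := by omega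
    have hz : zfam k m 2 ⟨⟨⟨i, T⟩, a⟩, h1, h2, h3⟩ = bb k m ∅ (Finsupp.single i 1) := by
      unfold zfam
      dsimp only
      rw [hT, ha]
    rw [hz, SetLike.mem_coe, koszulB]
    refine ⟨bb k m {i} 0, ?_, d_bb_singleton k m i⟩
    rw [show (2:ℕ) - 1 = 1 from rfl]
    exact Submodule.subset_span ⟨{i}, 0, by rw [Finsupp.sum_zero_index]; simp, rfl⟩
  rw [koszulH, eq_bot_iff]
  rintro y ⟨x, hx, rfl⟩
  rw [Submodule.mem_bot, Submodule.mkQ_apply, Submodule.Quotient.mk_eq_zero]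
  exact hZB hx

lemma hBZ_main (j : ℕ) (hj : 1 ≤ j) :
    koszulB k (discreteComplex m) (j + 1) ≤ koszulZ k (discreteComplex m) (j + 1) := by
  rw [bimg k m j, zker k m (j + 1) (by omega), Submodule.span_le]
  rintro f ⟨q, rfl⟩
  rcases q with qa | qe
  · obtain ⟨⟨⟨i, T⟩, a⟩, hi, ha, hdeg⟩ := qa
    have hi' : i ∈ T := hi
    have ha2 : 1 ≤ (a : ℕ) := ha
    have hdeg2 : 2 * (a : ℕ) + T.card = j := hdeg
    have hTpos : 0 < T.card := Finset.card_pos.mpr ⟨i, hi'⟩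
    simp only [aefam]
    rw [d_bbA k m hi' ha2]
    refine Submodule.smul_mem _ _ (Submodule.subset_span ?_)
    refine ⟨⟨((i, T.erase i), ⟨(a : ℕ) + 1, by omega⟩), Finset.notMem_erase _ _,
      Nat.succ_le_succ (Nat.zero_le _), ?_⟩, rfl⟩
    show 2 * ((a : ℕ) + 1) + (T.erase i).card = j + 1
    rw [Finset.card_erase_of_mem hi']
    omega
  · obtain ⟨S, hS⟩ := qe
    simp only [aefam]
    rw [d_bbE]
    refine Submodule.sum_mem _ fun i hiS => ?_
    refine Submodule.smul_mem _ _ (Submodule.subset_span ?_)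
    have hSpos : 0 < S.card := Finset.card_pos.mpr ⟨i, hiS⟩
    refine ⟨⟨((i, S.erase i), ⟨1, by omega⟩), Finset.notMem_erase _ _, le_rfl, ?_⟩, rfl⟩
    show 2 * 1 + (S.erase i).card = j + 1
    rw [Finset.card_erase_of_mem hiS]
    omega

lemma hmain_case (j : ℕ) (hj2 : 2 ≤ j) (hjm : j ≤ m) :
    Module.finrank k (koszulH k (discreteComplex m) (j + 1)) =
      m * (m - 1).choose (j - 1) - Nat.choose m j := by
  haveI : FiniteDimensional k (koszulZ k (discreteComplex m) (j + 1)) := by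
    rw [zker k m (j + 1) (by omega)]
    exact FiniteDimensional.span_of_finite k (Set.finite_range _)
  have hadd := finrank_H_add k (koszulB k (discreteComplex m) (j + 1))
    (koszulZ k (discreteComplex m) (j + 1)) (hBZ_main k m j (by omega))
  have hZ : Module.finrank k (koszulZ k (discreteComplex m) (j + 1)) =
      Fintype.card (ZIdx m (j + 1)) := by
    rw [zker k m (j + 1) (by omega)]
    exact finrank_span_eq_card (zfam_indep k m (j + 1))
  have hB : Module.finrank k (koszulB k (discreteComplex m) (j + 1)) =
      Fintype.card (QA m j) + Fintype.card (QE m j) := by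
    rw [bimg k m j, finrank_span_eq_card (daefam_indep k m j (by omega)),
      Fintype.card_sum]
  have hsplit : Fintype.card (ZIdx m (j + 1)) =
      Fintype.card {p : Fin m × Finset (Fin m) // p.1 ∉ p.2 ∧ p.2.card = j - 1} +
        Fintype.card (QA m j) := by
    rw [Fintype.card_congr (splitZ m j (by omega)), Fintype.card_sum]
  have hP := card_pairs m (j - 1)
  have hE := card_QE m j
  rw [koszulH]
  omega

end Ktest

/-- for the disjoint union `K` of `m` vertices, the cohomology of the
Koszul dg-algebra `[k(K) ⊗ Λ[u_1,…,u_m], d]` has `dim H⁰ = 1`, `H¹ = H² = 0`, and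
`dim H^{j+1} = m·C(m-1, j-1) − C(m, j)` for `2 ≤ j ≤ m`. -/
theorem koszul_cohomology_discrete (k : Type) [Field k] (m : ℕ) :
    Module.finrank k (koszulH k (discreteComplex m) 0) = 1 ∧
    koszulH k (discreteComplex m) 1 = ⊥ ∧
    koszulH k (discreteComplex m) 2 = ⊥ ∧
    ∀ j : ℕ, 2 ≤ j → j ≤ m →
      Module.finrank k (koszulH k (discreteComplex m) (j + 1)) =
        m * (m - 1).choose (j - 1) - m.choose j := by
  exact ⟨Ktest.h0_case k m, Ktest.h1_case k m, Ktest.h2_case k m,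
    fun j hj2 hjm => Ktest.hmain_case k m j hj2 hjm⟩
end
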